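/- arXiv:2008.10554 — 8 statements merged into one kernel-verified Lean document; each statement's English description precedes it below -/
import Mathlib

section
/- Let n ≥ 2 and ε, φ ∈ ℝ with either |ε| ≤ 1 < |φ| or |φ| ≤ 1 < |ε|. Then at least n − 1 of the n eigenvalues of T_{n,ε,φ} belong to the interval [−2, 2]; that is, T_{n,ε,φ} has at most one eigenvalue outside [−2, 2]. -/
/-!
For `s = ±1` the quadratic form of `T = T_{n,ε,φ}` satisfies
`2‖x‖² - s⟪x, T x⟫ = (1 - sε) x₁² + (1 - sφ) xₙ² + ∑ᵢ (xᵢ - s xᵢ₊₁)²`,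
so when `|ε| ≤ 1` the form `2‖x‖² - s⟪x, T x⟫` is at least `(1 - sφ) xₙ²`.
Evaluated at an eigenvector for an eigenvalue `λ` with `sλ > 2`, this forces `1 - sφ < 0`;
hence outliers of opposite signs cannot coexist. Two outliers of the same sign `s` have
orthogonal eigenvectors `u, v`, and `vₙ u - uₙ v` vanishes in the last coordinate, so the form
is nonnegative there, whereas the two eigenvalues make it negative. The case `|φ| ≤ 1` is the
same with `x₁` in place of `xₙ`.
-/

open Matrix Real Filter

/-- The n×n tridiagonal matrix `T_{n,ε,φ}` with `(T)_{11} = ε`, `(T)_{nn} = φ`,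
zero elsewhere on the diagonal, and ones on the first super- and subdiagonals. -/
noncomputable def Ttri (n : ℕ) (e f : ℝ) : Matrix (Fin n) (Fin n) ℝ :=
  fun i j =>
    if i = j then (if (i : ℕ) = 0 then e else if (i : ℕ) = n - 1 then f else 0)
    else if (i : ℕ) + 1 = (j : ℕ) ∨ (j : ℕ) + 1 = (i : ℕ) then 1 else 0

section QuadraticBound

variable {ι : Type*} [Fintype ι] {A : Matrix ι ι ℝ} {i₀ : ι} {a c : ℝ}

theorem dotProduct_self_pos {u : ι → ℝ} (hu : u ≠ 0) : 0 < u ⬝ᵥ u := by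
  simpa using dotProduct_star_self_pos_iff.mpr hu

theorem mul_sq_neg_of_mulVec_eq_smul (hq : ∀ x, a * x i₀ ^ 2 ≤ c * (x ⬝ᵥ x) - x ⬝ᵥ A *ᵥ x)
    {u : ι → ℝ} {μ : ℝ} (hu : A *ᵥ u = μ • u) (hu₀ : u ≠ 0) (hμ : c < μ) :
    a * u i₀ ^ 2 < 0 := by
  have h := hq u
  rw [hu, dotProduct_smul, smul_eq_mul] at h
  nlinarith [dotProduct_self_pos hu₀]

theorem false_of_orthogonal_mulVec_eq_smul
    (hq : ∀ x, a * x i₀ ^ 2 ≤ c * (x ⬝ᵥ x) - x ⬝ᵥ A *ᵥ x)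
    {u v : ι → ℝ} {μ ν : ℝ} (hu : A *ᵥ u = μ • u) (hv : A *ᵥ v = ν • v) (hu₀ : u ≠ 0)
    (hv₀ : v ≠ 0) (huv : u ⬝ᵥ v = 0) (hμ : c < μ) (hν : c < ν) : False := by
  have hvu : v ⬝ᵥ u = 0 := by rwa [dotProduct_comm]
  have hw := hq (v i₀ • u - u i₀ • v)
  simp only [mulVec_sub, mulVec_smul, hu, hv, dotProduct_sub, sub_dotProduct, dotProduct_smul,
    smul_dotProduct, huv, hvu, smul_eq_mul, Pi.sub_apply, Pi.smul_apply] at hw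
  have hw' : (μ - c) * v i₀ ^ 2 * (u ⬝ᵥ u) + (ν - c) * u i₀ ^ 2 * (v ⬝ᵥ v) ≤ 0 := by
    linear_combination hw
  have hui : u i₀ ≠ 0 := by
    intro h0
    simpa [h0] using mul_sq_neg_of_mulVec_eq_smul hq hu hu₀ hμ
  have h₁ : 0 ≤ (μ - c) * v i₀ ^ 2 * (u ⬝ᵥ u) := by
    have := dotProduct_self_pos hu₀; have := sub_pos.2 hμ; positivity
  have h₂ : 0 < (ν - c) * u i₀ ^ 2 * (v ⬝ᵥ v) := by
    have := dotProduct_self_pos hv₀; have := sub_pos.2 hν; positivity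
  linarith

theorem Matrix.IsHermitian.eigenvalues_notMem_Icc_subsingleton [DecidableEq ι]
    (hA : A.IsHermitian) (i₀ : ι) (g : ℝ)
    (hq : ∀ s : ℝ, s ^ 2 = 1 → ∀ x : ι → ℝ,
      (1 - s * g) * x i₀ ^ 2 ≤ 2 * (x ⬝ᵥ x) - x ⬝ᵥ (s • A) *ᵥ x) :
    {k | hA.eigenvalues k ∉ Set.Icc (-2 : ℝ) 2}.Subsingleton := by
  have hb₀ (k : ι) : ⇑(hA.eigenvectorBasis k) ≠ 0 := by
    simpa using hA.eigenvectorBasis.orthonormal.ne_zero k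
  have hbb {k l : ι} (h : k ≠ l) :
      ⇑(hA.eigenvectorBasis k) ⬝ᵥ ⇑(hA.eigenvectorBasis l) = 0 := by
    simpa [EuclideanSpace.inner_eq_star_dotProduct, dotProduct_comm] using
      hA.eigenvectorBasis.orthonormal.2 h
  have hAb (s : ℝ) (k : ι) : (s • A) *ᵥ ⇑(hA.eigenvectorBasis k) =
      (s * hA.eigenvalues k) • ⇑(hA.eigenvectorBasis k) := by
    rw [smul_mulVec, hA.mulVec_eigenvectorBasis, smul_smul]
  have hsign (k : ι) (hk : hA.eigenvalues k ∉ Set.Icc (-2 : ℝ) 2) :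
      ∃ s : ℝ, s ^ 2 = 1 ∧ 2 < s * hA.eigenvalues k := by
    rcases not_and_or.1 hk with hk | hk
    · exact ⟨-1, by norm_num, by linarith⟩
    · exact ⟨1, by norm_num, by linarith⟩
  intro k₁ hk₁ k₂ hk₂
  by_contra hne
  obtain ⟨s₁, hs₁, h₁⟩ := hsign k₁ hk₁
  obtain ⟨s₂, hs₂, h₂⟩ := hsign k₂ hk₂
  rcases sq_eq_sq_iff_eq_or_eq_neg.1 (hs₁.trans hs₂.symm) with rfl | rfl
  · exact false_of_orthogonal_mulVec_eq_smul (hq _ hs₁) (hAb _ k₁) (hAb _ k₂) (hb₀ k₁) (hb₀ k₂)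
      (hbb hne) h₁ h₂
  · have g₁ := mul_sq_neg_of_mulVec_eq_smul (hq _ hs₁) (hAb _ k₁) (hb₀ k₁) h₁
    have g₂ := mul_sq_neg_of_mulVec_eq_smul (hq _ hs₂) (hAb _ k₂) (hb₀ k₂) h₂
    linarith [neg_of_mul_neg_left g₁ (sq_nonneg _), neg_of_mul_neg_left g₂ (sq_nonneg _)]

end QuadraticBound

section Ttri

theorem sum_sum_ite_val_succ_eq {M : Type*} [AddCommMonoid M] (m : ℕ)
    (g : Fin (m + 2) → Fin (m + 2) → M) :
    ∑ i : Fin (m + 2), ∑ j : Fin (m + 2), (if (i : ℕ) + 1 = j then g i j else 0) =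
      ∑ k : Fin (m + 1), g k.castSucc k.succ := by
  have hsucc (k : Fin (m + 1)) (j : Fin (m + 2)) : (k.castSucc : ℕ) + 1 = j ↔ k.succ = j := by
    simp [Fin.ext_iff]
  have hlast (j : Fin (m + 2)) : ¬((Fin.last (m + 1) : ℕ) + 1 = j) := by
    simp only [Fin.val_last]; omega
  rw [Fin.sum_univ_castSucc]
  simp only [hsucc, hlast, Finset.sum_ite_eq, Finset.mem_univ, if_true, if_false,
    Finset.sum_const_zero, add_zero]

theorem dotProduct_mulVec_Ttri (m : ℕ) (e f : ℝ) (x : Fin (m + 2) → ℝ) :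
    x ⬝ᵥ Ttri (m + 2) e f *ᵥ x =
      e * x 0 ^ 2 + f * x (Fin.last _) ^ 2 + 2 * ∑ k : Fin (m + 1), x k.castSucc * x k.succ := by
  have hentry (i j : Fin (m + 2)) : x i * (Ttri (m + 2) e f i j * x j) =
      (if i = j then (if i = 0 then e * x i * x j else 0) +
        (if i = Fin.last _ then f * x i * x j else 0) else 0) +
      (if (i : ℕ) + 1 = j then x i * x j else 0) + (if (j : ℕ) + 1 = i then x j * x i else 0) := by
    obtain ⟨i, hi⟩ := i
    obtain ⟨j, hj⟩ := j
    simp only [Ttri, Fin.ext_iff, Fin.val_zero, Fin.val_last]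
    split_ifs <;> first | (exfalso; omega) | ring1
  simp only [dotProduct, mulVec, Finset.mul_sum, hentry, Finset.sum_add_distrib,
    sum_sum_ite_val_succ_eq]
  rw [Finset.sum_comm (f := fun i j : Fin (m + 2) => if (j : ℕ) + 1 = i then x j * x i else 0),
    sum_sum_ite_val_succ_eq]
  simp only [Finset.sum_ite_eq, Finset.sum_ite_eq', Finset.mem_univ, if_true,
    Finset.sum_add_distrib, ← Finset.mul_sum]
  ring

theorem two_mul_dotProduct_self_sub_smul_Ttri_mulVec (m : ℕ) (e f : ℝ) {s : ℝ}
    (hs : s ^ 2 = 1) (x : Fin (m + 2) → ℝ) :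
    2 * (x ⬝ᵥ x) - x ⬝ᵥ (s • Ttri (m + 2) e f) *ᵥ x =
      (1 - s * e) * x 0 ^ 2 + (1 - s * f) * x (Fin.last _) ^ 2 +
        ∑ k : Fin (m + 1), (x k.castSucc - s * x k.succ) ^ 2 := by
  have hlast : x ⬝ᵥ x = ∑ k : Fin (m + 1), x k.castSucc ^ 2 + x (Fin.last _) ^ 2 := by
    simp only [dotProduct, Fin.sum_univ_castSucc, sq]
  have hzero : x ⬝ᵥ x = x 0 ^ 2 + ∑ k : Fin (m + 1), x k.succ ^ 2 := by
    simp only [dotProduct, Fin.sum_univ_succ, sq]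
  have hsq : ∑ k : Fin (m + 1), (x k.castSucc - s * x k.succ) ^ 2 =
      ∑ k : Fin (m + 1), x k.castSucc ^ 2 - 2 * s * ∑ k : Fin (m + 1), x k.castSucc * x k.succ +
        ∑ k : Fin (m + 1), x k.succ ^ 2 := by
    simp only [sub_sq, mul_pow, hs, one_mul, Finset.sum_add_distrib, Finset.sum_sub_distrib,
      Finset.mul_sum, mul_assoc, mul_left_comm]
  rw [smul_mulVec, dotProduct_smul, smul_eq_mul, dotProduct_mulVec_Ttri, hsq]
  linear_combination hlast + hzero

theorem one_sub_mul_nonneg_of_sq_eq_one {s e : ℝ} (hs : s ^ 2 = 1) (he : |e| ≤ 1) :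
    0 ≤ 1 - s * e := by
  nlinarith [abs_le.1 he, sq_nonneg (s - e)]

theorem boundary_le_two_mul_dotProduct_self_sub_smul_Ttri_mulVec (m : ℕ) (e f : ℝ) {s : ℝ}
    (hs : s ^ 2 = 1) (x : Fin (m + 2) → ℝ) :
    (1 - s * e) * x 0 ^ 2 + (1 - s * f) * x (Fin.last _) ^ 2 ≤
      2 * (x ⬝ᵥ x) - x ⬝ᵥ (s • Ttri (m + 2) e f) *ᵥ x := by
  rw [two_mul_dotProduct_self_sub_smul_Ttri_mulVec m e f hs]
  have := Finset.sum_nonneg fun k (_ : k ∈ Finset.univ) =>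
    sq_nonneg (x (Fin.castSucc k) - s * x k.succ)
  linarith

theorem Ttri_bound_of_abs_first_le_one (m : ℕ) {e : ℝ} (f : ℝ) (he : |e| ≤ 1) {s : ℝ}
    (hs : s ^ 2 = 1) (x : Fin (m + 2) → ℝ) :
    (1 - s * f) * x (Fin.last _) ^ 2 ≤ 2 * (x ⬝ᵥ x) - x ⬝ᵥ (s • Ttri (m + 2) e f) *ᵥ x := by
  have := mul_nonneg (one_sub_mul_nonneg_of_sq_eq_one hs he) (sq_nonneg (x 0))
  linarith [boundary_le_two_mul_dotProduct_self_sub_smul_Ttri_mulVec m e f hs x]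

theorem Ttri_bound_of_abs_last_le_one (m : ℕ) (e : ℝ) {f : ℝ} (hf : |f| ≤ 1) {s : ℝ}
    (hs : s ^ 2 = 1) (x : Fin (m + 2) → ℝ) :
    (1 - s * e) * x 0 ^ 2 ≤ 2 * (x ⬝ᵥ x) - x ⬝ᵥ (s • Ttri (m + 2) e f) *ᵥ x := by
  have := mul_nonneg (one_sub_mul_nonneg_of_sq_eq_one hs hf) (sq_nonneg (x (Fin.last _)))
  linarith [boundary_le_two_mul_dotProduct_self_sub_smul_Ttri_mulVec m e f hs x]

end Ttri

/-- If `|ε| ≤ 1 < |φ|` or `|φ| ≤ 1 < |ε|`, then at least `n - 1` of the `n`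
eigenvalues of `T_{n,ε,φ}` (counted with multiplicity, i.e. as the list of
eigenvalues of the Hermitian matrix) lie in `[-2, 2]`; equivalently, at most one
lies outside `[-2, 2]`. -/
theorem stmt4 (n : ℕ) (hn : 2 ≤ n) (e f : ℝ)
    (h : (|e| ≤ 1 ∧ 1 < |f|) ∨ (|f| ≤ 1 ∧ 1 < |e|))
    (hH : (Ttri n e f).IsHermitian) :
    n - 1 ≤ {k : Fin n | hH.eigenvalues k ∈ Set.Icc (-2 : ℝ) 2}.ncard ∧
    {k : Fin n | hH.eigenvalues k ∉ Set.Icc (-2 : ℝ) 2}.ncard ≤ 1 := by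
  obtain ⟨m, rfl⟩ : ∃ m, n = m + 2 := ⟨n - 2, by omega⟩
  have hout : {k | hH.eigenvalues k ∉ Set.Icc (-2 : ℝ) 2}.Subsingleton := by
    rcases h with ⟨he, -⟩ | ⟨hf, -⟩
    · exact hH.eigenvalues_notMem_Icc_subsingleton (Fin.last _) f fun _ hs =>
        Ttri_bound_of_abs_first_le_one m f he hs
    · exact hH.eigenvalues_notMem_Icc_subsingleton 0 e fun _ hs =>
        Ttri_bound_of_abs_last_le_one m e hf hs
  have hcard := Set.ncard_add_ncard_compl {k | hH.eigenvalues k ∉ Set.Icc (-2 : ℝ) 2}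
  simp only [Set.compl_ofPred, not_not, Nat.card_eq_fintype_card, Fintype.card_fin] at hcard
  have hle := Set.ncard_le_one_iff_subsingleton.2 hout
  exact ⟨by omega, hle⟩
end

section
/- Let n ≥ 2 and ε, φ ∈ ℝ with |ε| > 1 and |φ| > 1. Then at least n − 2 of the n eigenvalues of T_{n,ε,φ} belong to the interval [−2, 2]; that is, T_{n,ε,φ} has at most two eigenvalues outside [−2, 2]. -/
open Matrix Real Filter

/-!
For `s = ±1`, the identity
`2‖x‖² - s⟪x, T x⟫ = (1 - sε) x₁² + (1 - sφ) xₙ² + ∑ᵢ (xᵢ - s xᵢ₊₁)²`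
shows `s⟪x, T x⟫ ≤ 2‖x‖²` for every `x` vanishing at each end `i ∈ {1, n}` with
`1 < s Tᵢᵢ`.
The span of the eigenvectors with `2 < sλ` meets that subspace only in `0`, so there are at most
as many such eigenvalues as constrained ends. An end is constrained for at most one of the two
signs, so at most two eigenvalues leave `[-2, 2]`.
-/

open Finset

namespace Matrix.IsHermitian

variable {ι : Type*} [Fintype ι] [DecidableEq ι] {A : Matrix ι ι ℝ} (hA : A.IsHermitian)

lemma dotProduct_sum_eigenvectorBasis {S : Finset ι} (a b : ι → ℝ) :
    (∑ k ∈ S, a k • ⇑(hA.eigenvectorBasis k)) ⬝ᵥ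
        (∑ k ∈ S, b k • ⇑(hA.eigenvectorBasis k)) =
      ∑ k ∈ S, a k * b k := by
  have := hA.eigenvectorBasis.orthonormal.inner_sum a b S
  rw [EuclideanSpace.inner_eq_star_dotProduct] at this
  simpa [dotProduct_comm] using this

lemma mulVec_sum_eigenvectorBasis {S : Finset ι} (a : ι → ℝ) :
    A *ᵥ (∑ k ∈ S, a k • ⇑(hA.eigenvectorBasis k)) =
      ∑ k ∈ S, (hA.eigenvalues k * a k) • ⇑(hA.eigenvectorBasis k) := by
  simp only [mulVec_sum, mulVec_smul, hA.mulVec_eigenvectorBasis, smul_smul, mul_comm]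

/-- On the span of the eigenvectors with `c < s λₖ` the form `s⟪x, A x⟫ - c‖x‖²` is positive
definite, so `L` is injective there. -/
theorem card_lt_mul_eigenvalues_le_finrank {M : Type*} [AddCommGroup M] [Module ℝ M]
    [FiniteDimensional ℝ M] (L : (ι → ℝ) →ₗ[ℝ] M) (s c : ℝ)
    (hL : ∀ x, L x = 0 → s * (x ⬝ᵥ (A *ᵥ x)) ≤ c * (x ⬝ᵥ x)) :
    #{k | c < s * hA.eigenvalues k} ≤ Module.finrank ℝ M := by
  set S : Finset ι := {k | c < s * hA.eigenvalues k}
  suffices LinearIndepOn ℝ (fun k ↦ L (hA.eigenvectorBasis k)) (S : Set ι) by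
    simpa using this.fintype_card_le_finrank
  refine linearIndepOn_finset_iff.mpr fun a ha k hk ↦ ?_
  have hx := hL (∑ k ∈ S, a k • ⇑(hA.eigenvectorBasis k)) (by simpa using ha)
  rw [hA.mulVec_sum_eigenvectorBasis, hA.dotProduct_sum_eigenvectorBasis,
    hA.dotProduct_sum_eigenvectorBasis, mul_sum, mul_sum, ← sub_nonpos, ← sum_sub_distrib] at hx
  have hgap (k : ι) (hk : k ∈ S) : 0 < s * hA.eigenvalues k - c :=
    sub_pos.mpr (mem_filter.mp hk).2
  have hterm (k : ι) (hk : k ∈ S) :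
      s * (a k * (hA.eigenvalues k * a k)) - c * (a k * a k) =
        (s * hA.eigenvalues k - c) * a k ^ 2 := by
    ring
  rw [sum_congr rfl hterm] at hx
  have hnonneg (k : ι) (hk : k ∈ S) : 0 ≤ (s * hA.eigenvalues k - c) * a k ^ 2 :=
    mul_nonneg (hgap k hk).le (sq_nonneg _)
  have h0 := (sum_eq_zero_iff_of_nonneg hnonneg).mp (le_antisymm hx (sum_nonneg hnonneg)) k hk
  exact pow_eq_zero_iff two_ne_zero |>.mp ((mul_eq_zero.mp h0).resolve_left (hgap k hk).ne')

end Matrix.IsHermitian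

lemma Fin.sum_sum_ite_val_add_one_eq {M : Type*} [AddCommMonoid M] {n : ℕ}
    (g : Fin (n + 1) → Fin (n + 1) → M) :
    ∑ i : Fin (n + 1), ∑ j : Fin (n + 1), (if (i : ℕ) + 1 = (j : ℕ) then g i j else 0) =
      ∑ i : Fin n, g i.castSucc i.succ := by
  rw [Fin.sum_univ_castSucc, sum_eq_zero fun j _ ↦ if_neg (by simp only [Fin.val_last]; omega),
    add_zero]
  refine sum_congr rfl fun i _ ↦ ?_
  rw [sum_eq_single i.succ (fun j _ hj ↦ if_neg ?_) (by simp), if_pos (by simp)]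
  rw [Fin.ne_iff_vne, Fin.val_succ] at hj
  rw [Fin.val_castSucc]
  exact hj.symm

variable {m : ℕ} {e f : ℝ}

lemma Ttri_apply (i j : Fin (m + 2)) :
    Ttri (m + 2) e f i j =
      (if i = 0 ∧ j = 0 then e else 0) + (if i = Fin.last _ ∧ j = Fin.last _ then f else 0) +
      (if (i : ℕ) + 1 = j then 1 else 0) + (if (j : ℕ) + 1 = i then 1 else 0) := by
  have := i.isLt
  have := j.isLt
  simp only [Ttri, Fin.ext_iff, Fin.val_zero, Fin.val_last]
  split_ifs <;> first | ring1 | (exfalso; omega)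

lemma Ttri_dotProduct_mulVec (x : Fin (m + 2) → ℝ) :
    x ⬝ᵥ (Ttri (m + 2) e f *ᵥ x) =
      e * x 0 ^ 2 + f * x (Fin.last _) ^ 2 + 2 * ∑ i : Fin (m + 1), x i.castSucc * x i.succ := by
  have hsup := Fin.sum_sum_ite_val_add_one_eq fun i j ↦ x i * x j
  have hsub := Fin.sum_sum_ite_val_add_one_eq fun i j ↦ x j * x i
  rw [sum_comm] at hsub
  simp only [dotProduct, mulVec, Ttri_apply, mul_add, add_mul, mul_sum, sum_add_distrib, mul_ite,
    ite_mul, mul_zero, zero_mul, one_mul, ite_and, sum_ite_irrel, sum_const_zero, sum_ite_eq',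
    mem_univ, if_true, hsup, hsub]
  simp only [mul_comm (x (Fin.succ _)), ← mul_sum]
  ring

lemma two_mul_dotProduct_self_sub_Ttri {s : ℝ} (hs : s ^ 2 = 1) (x : Fin (m + 2) → ℝ) :
    2 * (x ⬝ᵥ x) - s * (x ⬝ᵥ (Ttri (m + 2) e f *ᵥ x)) =
      (1 - s * e) * x 0 ^ 2 + (1 - s * f) * x (Fin.last _) ^ 2 +
        ∑ i : Fin (m + 1), (x i.castSucc - s * x i.succ) ^ 2 := by
  have hsq (i : Fin (m + 1)) : (x i.castSucc - s * x i.succ) ^ 2 =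
      x i.castSucc ^ 2 + x i.succ ^ 2 - 2 * s * (x i.castSucc * x i.succ) := by
    linear_combination x i.succ ^ 2 * hs
  have hlast : x ⬝ᵥ x = ∑ i : Fin (m + 1), x i.castSucc ^ 2 + x (Fin.last _) ^ 2 := by
    simp only [dotProduct, Fin.sum_univ_castSucc, sq]
  have hfirst : x ⬝ᵥ x = x 0 ^ 2 + ∑ i : Fin (m + 1), x i.succ ^ 2 := by
    simp only [dotProduct, Fin.sum_univ_succ, sq]
  rw [Ttri_dotProduct_mulVec, sum_congr rfl fun i _ ↦ hsq i, sum_sub_distrib, sum_add_distrib,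
    ← mul_sum]
  linear_combination hlast + hfirst

lemma mul_Ttri_dotProduct_mulVec_le {s : ℝ} (hs : s ^ 2 = 1) {x : Fin (m + 2) → ℝ}
    (h0 : 1 < s * e → x 0 = 0) (hl : 1 < s * f → x (Fin.last _) = 0) :
    s * (x ⬝ᵥ (Ttri (m + 2) e f *ᵥ x)) ≤ 2 * (x ⬝ᵥ x) := by
  have hend (a y : ℝ) (h : 1 < a → y = 0) : 0 ≤ (1 - a) * y ^ 2 := by
    rcases lt_or_ge 1 a with ha | ha
    · simp [h ha]
    · exact mul_nonneg (by linarith) (sq_nonneg y)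
  linarith [two_mul_dotProduct_self_sub_Ttri (e := e) (f := f) hs x, hend _ _ h0, hend _ _ hl,
    sum_nonneg fun i (_ : i ∈ univ) ↦ sq_nonneg (x (Fin.castSucc i) - s * x i.succ)]

lemma Ttri_apply_zero_zero : Ttri (m + 2) e f 0 0 = e := by
  simp [Ttri]

lemma Ttri_apply_last_last : Ttri (m + 2) e f (Fin.last _) (Fin.last _) = f := by
  simp [Ttri]

lemma card_two_lt_mul_eigenvalues_Ttri_le (hH : (Ttri (m + 2) e f).IsHermitian) {s : ℝ}
    (hs : s ^ 2 = 1) :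
    #{k | 2 < s * hH.eigenvalues k} ≤
      #{i ∈ {0, Fin.last _} | 1 < s * Ttri (m + 2) e f i i} := by
  set J : Finset (Fin (m + 2)) := {i ∈ {0, Fin.last _} | 1 < s * Ttri (m + 2) e f i i}
  have hJ : Module.finrank ℝ (J → ℝ) = #J := by simp
  refine hJ ▸ hH.card_lt_mul_eigenvalues_le_finrank (LinearMap.funLeft ℝ ℝ Subtype.val) s 2
    fun x hx ↦ mul_Ttri_dotProduct_mulVec_le hs (fun h ↦ ?_) (fun h ↦ ?_)
  · exact congr_fun hx ⟨0, by simp [J, Ttri_apply_zero_zero, h]⟩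
  · exact congr_fun hx ⟨Fin.last _, by simp [J, Ttri_apply_last_last, h]⟩

lemma ncard_eigenvalues_Ttri_notMem_Icc_le (hH : (Ttri (m + 2) e f).IsHermitian) :
    {k | hH.eigenvalues k ∉ Set.Icc (-2 : ℝ) 2}.ncard ≤ 2 := by
  set J : ℝ → Finset (Fin (m + 2)) :=
    fun s ↦ {i ∈ {0, Fin.last _} | 1 < s * Ttri (m + 2) e f i i}
  set A : ℝ → Finset (Fin (m + 2)) := fun s ↦ {k | 2 < s * hH.eigenvalues k}
  have hsplit : {k | hH.eigenvalues k ∉ Set.Icc (-2 : ℝ) 2} = ↑(A 1 ∪ A (-1)) := by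
    ext k
    simp only [Set.mem_Icc, not_and_or, not_le, Set.mem_ofPred_eq, one_mul, neg_mul, coe_union,
      coe_filter, mem_univ, true_and, Set.mem_union, A]
    constructor <;> rintro (h | h) <;> first | (left; linarith) | (right; linarith)
  have hdisj : Disjoint (J 1) (J (-1)) :=
    disjoint_filter.mpr fun i _ h₁ h₂ ↦ by linarith
  calc {k | hH.eigenvalues k ∉ Set.Icc (-2 : ℝ) 2}.ncard
      ≤ #(A 1) + #(A (-1)) := by
        rw [hsplit, Set.ncard_coe_finset]; exact card_union_le _ _
    _ ≤ #(J 1) + #(J (-1)) := add_le_add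
        (card_two_lt_mul_eigenvalues_Ttri_le hH (by norm_num))
        (card_two_lt_mul_eigenvalues_Ttri_le hH (by norm_num))
    _ = #(J 1 ∪ J (-1)) := (card_union_of_disjoint hdisj).symm
    _ ≤ #{0, Fin.last (m + 1)} :=
        card_le_card (union_subset (filter_subset _ _) (filter_subset _ _))
    _ ≤ 2 := card_le_two

theorem stmt5_general (n : ℕ) (e f : ℝ)
    (hH : (Ttri n e f).IsHermitian) :
    n - 2 ≤ {k : Fin n | hH.eigenvalues k ∈ Set.Icc (-2 : ℝ) 2}.ncard ∧
    {k : Fin n | hH.eigenvalues k ∉ Set.Icc (-2 : ℝ) 2}.ncard ≤ 2 := by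
  have hout : {k : Fin n | hH.eigenvalues k ∉ Set.Icc (-2 : ℝ) 2}.ncard ≤ 2 := by
    rcases lt_or_ge n 2 with hn | hn
    · exact (Set.ncard_le_card _).trans (by simpa using hn.le)
    · obtain ⟨m, rfl⟩ := Nat.exists_eq_add_of_le' hn
      exact ncard_eigenvalues_Ttri_notMem_Icc_le hH
  have hcompl := Set.ncard_add_ncard_compl {k : Fin n | hH.eigenvalues k ∉ Set.Icc (-2 : ℝ) 2}
  simp only [Set.compl_ofPred, not_not, Nat.card_eq_fintype_card, Fintype.card_fin] at hcompl
  omega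

/-- If `|ε| > 1` and `|φ| > 1`, then at least `n - 2` of the `n` eigenvalues of
`T_{n,ε,φ}` (counted with multiplicity, i.e. as the list of eigenvalues of the
Hermitian matrix) lie in `[-2, 2]`; equivalently, at most two lie outside. -/
theorem stmt5 (n : ℕ) (hn : 2 ≤ n) (e f : ℝ)
    (he : 1 < |e|) (hf : 1 < |f|)
    (hH : (Ttri n e f).IsHermitian) :
    n - 2 ≤ {k : Fin n | hH.eigenvalues k ∈ Set.Icc (-2 : ℝ) 2}.ncard ∧
    {k : Fin n | hH.eigenvalues k ∉ Set.Icc (-2 : ℝ) 2}.ncard ≤ 2 :=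
  stmt5_general n e f hH
end

section
/- Fix ε, φ ∈ ℝ with |ε| > 1. Then the distance from the spectrum of T_{n,ε,φ} to the point ε + ε^{-1} tends to 0 as n → ∞; i.e., for every n there exists an eigenvalue μ_n of T_{n,ε,φ} such that μ_n → ε + ε^{-1} as n → ∞. Since |ε + ε^{-1}| > 2, the eigenvalue μ_n lies outside [−2, 2] for all sufficiently large n. Analogously, if |φ| > 1 then there exists an eigenvalue ν_n of T_{n,ε,φ} such that ν_n → φ + φ^{-1} as n → ∞, and ν_n lies outside [−2, 2] for all sufficiently large n. -/
open Matrix Real Filter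

/-- `x` is an eigenvalue of `T_{n,ε,φ}`. -/
def HasEigen (n : ℕ) (e f x : ℝ) : Prop :=
  ∃ v : Fin n → ℝ, v ≠ 0 ∧ (Ttri n e f).mulVec v = x • v

/-!
The geometric vector `v_j = ε^{-j}` satisfies `T v = (ε + ε⁻¹) v` in every row except the last,
where the defect is `(φ - ε⁻¹) ε^{-(n-1)}`. Since `T` is symmetric, expanding `v` in an orthonormal
eigenbasis shows that some eigenvalue lies within `‖T v - λ v‖ / ‖v‖` of `λ`, and `‖v‖ ≥ |v₀| = 1`,
so some eigenvalue is within `|φ - ε⁻¹| |ε|^{-(n-1)} → 0` of `ε + ε⁻¹`. Reversing the order of the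
coordinates exchanges `ε` and `φ`, which gives the statement for `φ`.
-/

theorem LinearMap.IsSymmetric.exists_hasEigenvalue_abs_sub_mul_norm_le
    {E : Type*} [NormedAddCommGroup E] [InnerProductSpace ℝ E] [FiniteDimensional ℝ E]
    {T : E →ₗ[ℝ] E} (hT : T.IsSymmetric) (c : ℝ) {v : E} (hv : v ≠ 0) :
    ∃ μ, Module.End.HasEigenvalue T μ ∧ |μ - c| * ‖v‖ ≤ ‖T v - c • v‖ := by
  have : Nontrivial E := ⟨⟨v, 0, hv⟩⟩
  have : Nonempty (Fin (Module.finrank ℝ E)) := ⟨⟨0, Module.finrank_pos⟩⟩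
  set b := hT.eigenvectorBasis rfl
  set μ := hT.eigenvalues rfl
  obtain ⟨i, -, hi⟩ := Finset.univ.exists_min_image (fun j => |μ j - c|) Finset.univ_nonempty
  refine ⟨μ i, hT.hasEigenvalue_eigenvalues rfl i, ?_⟩
  have hrepr : ∀ j, b.repr (T v - c • v) j = (μ j - c) * b.repr v j := by
    intro j
    simp only [map_sub, map_smul, PiLp.sub_apply, PiLp.smul_apply, smul_eq_mul, b, μ,
      hT.eigenvectorBasis_apply_self_apply, RCLike.ofReal_real_eq_id, id_eq]
    ring
  rw [← b.repr.norm_map v, ← b.repr.norm_map (T v - c • v)]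
  refine le_of_sq_le_sq ?_ (norm_nonneg _)
  simp only [mul_pow, EuclideanSpace.norm_sq_eq, Real.norm_eq_abs, sq_abs, hrepr, Finset.mul_sum]
  refine Finset.sum_le_sum fun j _ => ?_
  exact mul_le_mul_of_nonneg_right (sq_le_sq.mpr (hi j (Finset.mem_univ j))) (sq_nonneg _)

lemma Fin.sum_univ_ite_val_eq {M : Type*} [AddCommMonoid M] (n a : ℕ) (c : M) :
    ∑ j : Fin n, (if a = (j : ℕ) then c else 0) = if a < n then c else 0 := by
  rw [Fin.sum_univ_eq_sum_range (fun j => if a = j then c else 0)]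
  simp only [Finset.sum_ite_eq, Finset.mem_range]

lemma Ttri_mulVec_apply (n : ℕ) (e f : ℝ) (v : ℕ → ℝ) (i : Fin n) :
    (Ttri n e f *ᵥ fun j => v j) i =
      (if (i : ℕ) = 0 then e else if (i : ℕ) = n - 1 then f else 0) * v i
        + (if (i : ℕ) + 1 < n then v (i + 1) else 0)
        + (if 0 < (i : ℕ) then v (i - 1) else 0) := by
  set d := if (i : ℕ) = 0 then e else if (i : ℕ) = n - 1 then f else 0
  have entry : ∀ j : Fin n, Ttri n e f i j * v j =
      (if (i : ℕ) = j then d * v i else 0) + (if (i : ℕ) + 1 = j then v (i + 1) else 0)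
        + (if 0 < (i : ℕ) then if (i : ℕ) - 1 = j then v (i - 1) else 0 else 0) := by
    rintro ⟨j, hj⟩
    simp only [Ttri, d, Fin.ext_iff]
    split_ifs <;> subst_vars <;> first | omega | ring1
  simp only [mulVec, dotProduct, entry, Finset.sum_add_distrib, Fin.sum_univ_ite_val_eq,
    Finset.sum_ite_irrel, Finset.sum_const_zero, if_pos i.isLt,
    if_pos ((Nat.sub_le _ 1).trans_lt i.isLt)]

lemma Ttri_mulVec_geom (n : ℕ) (hn : 2 ≤ n) (e f : ℝ) (he : e ≠ 0) :
    Ttri n e f *ᵥ (fun j : Fin n => e⁻¹ ^ (j : ℕ)) =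
      (e + e⁻¹) • (fun j : Fin n => e⁻¹ ^ (j : ℕ))
        + Pi.single ⟨n - 1, by omega⟩ ((f - e⁻¹) * e⁻¹ ^ (n - 1)) := by
  funext ⟨k, hk⟩
  rw [Ttri_mulVec_apply n e f (e⁻¹ ^ ·)]
  simp only [Pi.add_apply, Pi.smul_apply, smul_eq_mul, Pi.single_apply, Fin.ext_iff]
  rcases k with _ | m
  · simp only [pow_zero, pow_one, if_true, lt_irrefl, if_false, zero_add,
      if_pos (show 1 < n by omega), if_neg (show 0 ≠ n - 1 by omega)]
    ring
  · have hpow : e⁻¹ ^ (m + 1) * e = e⁻¹ ^ m := by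
      rw [pow_succ, mul_assoc, inv_mul_cancel₀ he, mul_one]
    simp only [Nat.add_sub_cancel, Nat.succ_ne_zero, if_false, Nat.succ_pos, if_true]
    by_cases hlast : m + 1 = n - 1
    · rw [if_pos hlast, if_pos hlast, if_neg (by omega), ← hlast, ← hpow]
      ring
    · rw [if_neg hlast, if_neg hlast, if_pos (by omega), ← hpow]
      ring

lemma Ttri_isHermitian (n : ℕ) (e f : ℝ) : (Ttri n e f).IsHermitian := by
  ext i j
  simp only [conjTranspose_apply, Ttri, star_trivial]
  rcases eq_or_ne i j with rfl | h
  · rfl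
  · rw [if_neg h.symm, if_neg h]
    exact if_congr or_comm rfl rfl

lemma exists_hasEigen_abs_sub_le (n : ℕ) (hn : 2 ≤ n) (e f : ℝ) (he : e ≠ 0) :
    ∃ μ, HasEigen n e f μ ∧ |μ - (e + e⁻¹)| ≤ |f - e⁻¹| * |e⁻¹| ^ (n - 1) := by
  set w : EuclideanSpace ℝ (Fin n) := WithLp.toLp 2 fun j : Fin n => e⁻¹ ^ (j : ℕ)
  have hw : 1 ≤ ‖w‖ := by
    simpa [w] using PiLp.norm_apply_le w ⟨0, by omega⟩
  have hT := isSymmetric_toEuclideanLin_iff.mpr (Ttri_isHermitian n e f)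
  obtain ⟨μ, hμ, hle⟩ := hT.exists_hasEigenvalue_abs_sub_mul_norm_le (e + e⁻¹)
    (norm_pos_iff.mp (one_pos.trans_le hw))
  have hres :
      ‖toEuclideanLin (Ttri n e f) w - (e + e⁻¹) • w‖ = |f - e⁻¹| * |e⁻¹| ^ (n - 1) := by
    rw [toLpLin_toLp, ← WithLp.toLp_smul, ← WithLp.toLp_sub, toLin'_apply,
      Ttri_mulVec_geom n hn e f he, add_sub_cancel_left, PiLp.toLp_single, PiLp.norm_single,
      Real.norm_eq_abs, abs_mul, abs_pow]
  refine ⟨μ, ?_, ?_⟩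
  · obtain ⟨x, hx⟩ := hμ.exists_hasEigenvector
    refine ⟨WithLp.ofLp x, fun h => hx.2 (by simpa using congrArg (WithLp.toLp 2) h), ?_⟩
    simpa using congrArg WithLp.ofLp (Module.End.mem_eigenspace_iff.mp hx.1)
  · calc |μ - (e + e⁻¹)| ≤ |μ - (e + e⁻¹)| * ‖w‖ := le_mul_of_one_le_right (abs_nonneg _) hw
      _ ≤ _ := hle.trans hres.le

lemma Ttri_submatrix_rev (n : ℕ) (hn : n ≠ 1) (e f : ℝ) :
    (Ttri n e f).submatrix Fin.revPerm Fin.revPerm = Ttri n f e := by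
  ext i j
  simp only [submatrix_apply, Fin.revPerm_apply, Ttri, Fin.rev_inj, Fin.val_rev]
  have := i.isLt; have := j.isLt
  split_ifs <;> first | rfl | omega

lemma HasEigen.swap {n : ℕ} (hn : n ≠ 1) {e f x : ℝ} (h : HasEigen n e f x) :
    HasEigen n f e x := by
  obtain ⟨v, hv0, hv⟩ := h
  refine ⟨v ∘ Fin.revPerm, fun h0 => hv0 ?_, ?_⟩
  · ext i
    simpa using congrFun h0 (Fin.rev i)
  · rw [← Ttri_submatrix_rev n hn, submatrix_mulVec_equiv,
      Function.comp_assoc, Equiv.self_comp_symm, Function.comp_id, hv]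
    rfl

lemma exists_tendsto_hasEigen (e f : ℝ) (he : 1 < |e|) :
    ∃ mu : ℕ → ℝ, (∀ n, 2 ≤ n → HasEigen n e f (mu n)) ∧
      Tendsto mu atTop (nhds (e + e⁻¹)) := by
  have he0 : e ≠ 0 := by rintro rfl; norm_num at he
  have : ∀ n, ∃ μ, 2 ≤ n → HasEigen n e f μ ∧ |μ - (e + e⁻¹)| ≤ |f - e⁻¹| * |e⁻¹| ^ (n - 1) :=
    fun n => if hn : 2 ≤ n then (exists_hasEigen_abs_sub_le n hn e f he0).imp fun _ h _ => h
      else ⟨0, fun h => absurd h hn⟩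
  choose mu hmu using this
  refine ⟨mu, fun n hn => (hmu n hn).1, ?_⟩
  have hr : |e⁻¹| < 1 := by rw [abs_inv]; exact inv_lt_one_of_one_lt₀ he
  have hbound : Tendsto (fun n => |f - e⁻¹| * |e⁻¹| ^ (n - 1)) atTop (nhds 0) := by
    simpa using ((tendsto_pow_atTop_nhds_zero_of_lt_one (abs_nonneg _) hr).comp
      (tendsto_sub_atTop_nat 1)).const_mul |f - e⁻¹|
  refine tendsto_iff_norm_sub_tendsto_zero.mpr
    (squeeze_zero' (Eventually.of_forall fun _ => norm_nonneg _) ?_ hbound)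
  filter_upwards [eventually_ge_atTop 2] with n hn using (hmu n hn).2

lemma add_inv_notMem_Icc {x : ℝ} (hx : 1 < |x|) : x + x⁻¹ ∉ Set.Icc (-2 : ℝ) 2 := by
  have hx0 : x ≠ 0 := by rintro rfl; norm_num at hx
  have := mul_inv_cancel₀ hx0
  rintro ⟨h₁, h₂⟩
  rcases lt_abs.mp hx with h | h <;> nlinarith

lemma eventually_notMem_Icc_of_tendsto {x : ℝ} (hx : 1 < |x|) {mu : ℕ → ℝ}
    (h : Tendsto mu atTop (nhds (x + x⁻¹))) : ∀ᶠ n in atTop, mu n ∉ Set.Icc (-2 : ℝ) 2 :=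
  h.eventually (isClosed_Icc.isOpen_compl.mem_nhds (add_inv_notMem_Icc hx))

theorem stmt7 (e f : ℝ) (he : 1 < |e|) :
    (∃ mu : ℕ → ℝ,
      (∀ n, 2 ≤ n → HasEigen n e f (mu n)) ∧
      Tendsto mu atTop (nhds (e + e⁻¹)) ∧
      ∀ᶠ n in atTop, mu n ∉ Set.Icc (-2 : ℝ) 2) ∧
    (1 < |f| →
      ∃ nu : ℕ → ℝ,
        (∀ n, 2 ≤ n → HasEigen n e f (nu n)) ∧
        Tendsto nu atTop (nhds (f + f⁻¹)) ∧
        ∀ᶠ n in atTop, nu n ∉ Set.Icc (-2 : ℝ) 2) := by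
  obtain ⟨mu, hmu, hlim⟩ := exists_tendsto_hasEigen e f he
  refine ⟨⟨mu, hmu, hlim, eventually_notMem_Icc_of_tendsto he hlim⟩, fun hf => ?_⟩
  obtain ⟨nu, hnu, hlim'⟩ := exists_tendsto_hasEigen f e hf
  exact ⟨nu, fun n hn => (hnu n hn).swap (by omega), hlim',
    eventually_notMem_Icc_of_tendsto hf hlim'⟩
end

section
/- Let n ≥ 2, ε, φ ∈ ℝ, and θ ∈ (0, ∞). The number λ = 2 cosh θ is an eigenvalue of T_{n,ε,φ} if and only if sinh((n+1)θ) − (ε + φ) sinh(nθ) + εφ sinh((n−1)θ) = 0. In that case, the vector v ∈ ℝ^n with entries v_i = sinh(iθ) − ε sinh((i−1)θ), i = 1, …, n, is nonzero and satisfies T_{n,ε,φ} v = λ v. -/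
open Matrix Real Filter

lemma Ttri_mulVec (n : ℕ) (hn : 2 ≤ n) (e f : ℝ) (w : Fin n → ℝ) (i : Fin n) :
    (Ttri n e f).mulVec w i =
    (if (i:ℕ) = 0 then e else if (i:ℕ) = n - 1 then f else 0) * w i
    + (if h : (i:ℕ) + 1 < n then w ⟨(i:ℕ)+1, h⟩ else 0)
    + (if h : 0 < (i:ℕ) then w ⟨(i:ℕ)-1, by omega⟩ else 0) := by
  have hi := i.isLt
  simp only [mulVec, dotProduct]
  by_cases h1 : (i:ℕ) + 1 < n <;> by_cases h2 : 0 < (i:ℕ) <;>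
    simp only [h1, h2, dite_true, dite_false, dif_pos, dif_neg, not_lt] <;>
  · rw [show (∑ j, Ttri n e f i j * w j) = ∑ j : Fin n,
        ((if j = i then (if (i:ℕ) = 0 then e else if (i:ℕ) = n - 1 then f else 0) * w j else 0)
        + (if h : (i:ℕ) + 1 < n then (if j = (⟨(i:ℕ)+1, h⟩ : Fin n) then w j else 0) else 0)
        + (if h : 0 < (i:ℕ) then (if j = (⟨(i:ℕ)-1, by omega⟩ : Fin n) then w j else 0) else 0)) from
      Finset.sum_congr rfl fun j _ => by
        have hj := j.isLt
        simp only [Ttri, Fin.ext_iff]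
        split_ifs <;> (try omega) <;> ring]
    simp only [Finset.sum_add_distrib, h1, h2, dite_true, dite_false, dif_pos, dif_neg, not_lt,
      Finset.sum_ite_eq' Finset.univ, Finset.mem_univ, if_true, Finset.sum_const_zero]

noncomputable def vf (e θ : ℝ) (k : ℕ) : ℝ :=
  Real.sinh (((k:ℝ)+1)*θ) - e * Real.sinh ((k:ℝ)*θ)

lemma srec (θ x : ℝ) :
    Real.sinh ((x+2)*θ) + Real.sinh (x*θ) = 2 * Real.cosh θ * Real.sinh ((x+1)*θ) := by
  rw [show (x+2)*θ = (x+1)*θ + θ by ring, show x*θ = (x+1)*θ - θ by ring,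
    Real.sinh_add, Real.sinh_sub]
  ring

lemma vf_rec (e θ : ℝ) (k : ℕ) :
    vf e θ (k+2) + vf e θ k = 2 * Real.cosh θ * vf e θ (k+1) := by
  unfold vf
  push_cast
  have h1 := srec θ ((k:ℝ)+1)
  have h2 := srec θ (k:ℝ)
  ring_nf at h1 h2 ⊢
  linear_combination h1 - e * h2

lemma Tv (m : ℕ) (e f θ : ℝ) (i : Fin (m+2)) :
    (Ttri (m+2) e f).mulVec (fun j => vf e θ (j:ℕ)) i =
      2 * Real.cosh θ * vf e θ (i:ℕ) -
        (if (i:ℕ) = m + 1 then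
          Real.sinh (((m:ℝ)+3)*θ) - (e+f) * Real.sinh (((m:ℝ)+2)*θ)
            + e * f * Real.sinh (((m:ℝ)+1)*θ) else 0) := by
  have hi := i.isLt
  rw [Ttri_mulVec (m+2) (by omega) e f _ i]
  rcases Nat.eq_zero_or_pos (i:ℕ) with h0 | h0
  · -- first row
    have hne : ¬ ((i:ℕ) = m + 2 - 1) := by omega
    simp only [h0, if_true, hne, if_false, show (0:ℕ)+1 < m+2 by omega, dite_true,
      show ¬ (0 < (0:ℕ)) by omega, dite_false, dif_pos, dif_neg, not_lt]
    have h2 := srec θ 0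
    simp only [vf, h0]
    push_cast
    simp only [zero_mul, Real.sinh_zero] at h2 ⊢
    ring_nf at h2 ⊢
    linear_combination h2
  · rcases eq_or_ne (i:ℕ) (m+1) with hl | hl
    · -- last row
      have hne : ¬ ((i:ℕ) = 0) := by omega
      rw [if_neg hne, if_pos (show (i:ℕ) = m+2-1 by omega),
        dif_neg (show ¬ ((i:ℕ)+1 < m+2) by omega),
        dif_pos (show 0 < (i:ℕ) by omega), if_pos hl]
      simp only [Fin.val_mk]
      rw [hl, show m+1-1 = m by omega]
      have h1 := srec θ ((m:ℝ)+1)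
      have h2 := srec θ (m:ℝ)
      simp only [vf]
      push_cast
      ring_nf at h1 h2 ⊢
      linear_combination h1 - e * h2
    · -- middle row
      have hne : ¬ ((i:ℕ) = 0) := by omega
      have hne2 : ¬ ((i:ℕ) = m+2-1) := by omega
      simp only [hne, hne2, if_false, hl, show (i:ℕ)+1 < m+2 by omega, dite_true,
        h0, dite_true, dif_pos, zero_mul, zero_add]
      have := vf_rec e θ ((i:ℕ)-1)
      rw [show (i:ℕ)-1+2 = (i:ℕ)+1 by omega, show (i:ℕ)-1+1 = (i:ℕ) by omega] at this
      linarith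

theorem stmt13 (n : ℕ) (hn : 2 ≤ n) (e f θ : ℝ) (hθ : 0 < θ) :
    (HasEigen n e f (2 * Real.cosh θ) ↔
      Real.sinh (((n : ℝ) + 1) * θ) - (e + f) * Real.sinh ((n : ℝ) * θ) +
        e * f * Real.sinh (((n : ℝ) - 1) * θ) = 0) ∧
    (Real.sinh (((n : ℝ) + 1) * θ) - (e + f) * Real.sinh ((n : ℝ) * θ) +
        e * f * Real.sinh (((n : ℝ) - 1) * θ) = 0 →
      ((fun i : Fin n =>
          Real.sinh (((i : ℕ) + 1 : ℝ) * θ) - e * Real.sinh ((i : ℕ) * θ)) : Fin n → ℝ) ≠ 0 ∧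
      (Ttri n e f).mulVec
          (fun i : Fin n =>
            Real.sinh (((i : ℕ) + 1 : ℝ) * θ) - e * Real.sinh ((i : ℕ) * θ)) =
        (2 * Real.cosh θ) •
          ((fun i : Fin n =>
            Real.sinh (((i : ℕ) + 1 : ℝ) * θ) - e * Real.sinh ((i : ℕ) * θ)) : Fin n → ℝ)) := by
  obtain ⟨m, rfl⟩ : ∃ m, n = m + 2 := ⟨n - 2, by omega⟩
  have hsθ : Real.sinh θ ≠ 0 := by positivity
  set L := 2 * Real.cosh θ with hL
  have hveq : (fun i : Fin (m+2) =>
      Real.sinh (((i : ℕ) + 1 : ℝ) * θ) - e * Real.sinh ((i : ℕ) * θ)) =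
      (fun j : Fin (m+2) => vf e θ (j:ℕ)) := by
    funext j; simp [vf]
  -- the eigen equation in normalized form
  have hDsame : (Real.sinh ((((m+2:ℕ) : ℝ) + 1) * θ) - (e + f) * Real.sinh (((m+2:ℕ) : ℝ) * θ) +
        e * f * Real.sinh ((((m+2:ℕ) : ℝ) - 1) * θ)) =
      (Real.sinh (((m:ℝ)+3)*θ) - (e+f) * Real.sinh (((m:ℝ)+2)*θ)
            + e * f * Real.sinh (((m:ℝ)+1)*θ)) := by
    push_cast
    ring_nf
  -- Part 2 first
  have part2 : (Real.sinh ((((m+2:ℕ) : ℝ) + 1) * θ) - (e + f) * Real.sinh (((m+2:ℕ) : ℝ) * θ) +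
        e * f * Real.sinh ((((m+2:ℕ) : ℝ) - 1) * θ) = 0) →
      ((fun j : Fin (m+2) => vf e θ (j:ℕ)) ≠ 0 ∧
      (Ttri (m+2) e f).mulVec (fun j : Fin (m+2) => vf e θ (j:ℕ)) =
        L • (fun j : Fin (m+2) => vf e θ (j:ℕ))) := by
    intro hD
    rw [hDsame] at hD
    constructor
    · intro h0
      apply hsθ
      have h1 := congrFun h0 ⟨0, by omega⟩
      simpa [vf] using h1
    · funext i
      rw [Tv m e f θ i, Pi.smul_apply, smul_eq_mul]
      rcases eq_or_ne (i:ℕ) (m+1) with h|h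
      · rw [if_pos h, hD]; ring
      · rw [if_neg h]; ring
  refine ⟨⟨?_, fun hD => ⟨(fun j => vf e θ (j:ℕ)), (part2 hD).1, (part2 hD).2⟩⟩,
    fun hD => by rw [hveq]; exact part2 hD⟩
  -- hard direction: eigenvalue implies the equation
  rintro ⟨w, hw0, hw⟩
  have row : ∀ k (hk : k < m+2),
      (if k = 0 then e else if k = m+2-1 then f else 0) * w ⟨k,hk⟩
      + (if h : k+1 < m+2 then w ⟨k+1,h⟩ else 0)
      + (if h : 0 < k then w ⟨k-1, by omega⟩ else 0) = L * w ⟨k,hk⟩ := by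
    intro k hk
    have h := Ttri_mulVec (m+2) (by omega) e f w ⟨k,hk⟩
    rw [hw] at h
    simpa using h.symm
  obtain ⟨c, hw0c⟩ : ∃ c, w ⟨0, by omega⟩ = c * Real.sinh θ :=
    ⟨w ⟨0, by omega⟩ / Real.sinh θ, by field_simp⟩
  have key : ∀ k, ∀ hk : k < m+2, w ⟨k, hk⟩ = c * vf e θ k := by
    intro k
    induction k using Nat.strong_induction_on with
    | _ k ih =>
      match k with
      | 0 =>
        intro hk
        have : vf e θ 0 = Real.sinh θ := by simp [vf]
        rw [this]; exact hw0c
      | 1 =>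
        intro hk
        have E := row 0 (by omega)
        rw [if_pos rfl, dif_pos (by omega : 0+1 < m+2), dif_neg (by omega : ¬ (0 < 0))] at E
        have h2 := srec θ 0
        simp only [Real.sinh_zero, zero_mul] at h2
        simp only [vf]
        push_cast
        ring_nf at E h2 hw0c ⊢
        linear_combination E + (L - e) * hw0c - c * h2
      | (l+2) =>
        intro hk
        have E := row (l+1) (by omega)
        rw [if_neg (by omega : ¬ (l+1 = 0)), if_neg (by omega : ¬ (l+1 = m+2-1)),
          dif_pos (by omega : l+1+1 < m+2), dif_pos (by omega : 0 < l+1)] at E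
        simp only [Nat.add_sub_cancel] at E
        have e1 := ih (l+1) (by omega) (by omega)
        have e2 := ih l (by omega) (by omega)
        have hr := vf_rec e θ l
        show w ⟨l+1+1, hk⟩ = c * vf e θ (l+2)
        linear_combination E - e2 + L * e1 - c * hr
  have hcne : c ≠ 0 := by
    intro h
    apply hw0
    funext j
    have := key (j:ℕ) j.isLt
    rw [h, zero_mul] at this
    simpa using this
  -- last row
  have E := row (m+1) (by omega)
  rw [if_neg (by omega : ¬ (m+1 = 0)), if_pos (by omega : m+1 = m+2-1),
    dif_neg (by omega : ¬ (m+1+1 < m+2)), dif_pos (by omega : 0 < m+1)] at E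
  simp only [Nat.add_sub_cancel] at E
  rw [key (m+1) (by omega), key m (by omega)] at E
  have E2 : f * vf e θ (m+1) + vf e θ m = L * vf e θ (m+1) := by
    have h := mul_left_cancel₀ hcne (show c * (f * vf e θ (m+1) + vf e θ m)
        = c * (L * vf e θ (m+1)) by linear_combination E)
    exact h
  rw [hDsame]
  have h1 := srec θ ((m:ℝ)+1)
  have h2 := srec θ (m:ℝ)
  simp only [vf] at E2
  push_cast at E2
  ring_nf at E2 h1 h2 ⊢
  linear_combination h1 - e * h2 - E2
end

section
/- Let n ≥ 2 and ε, φ ∈ ℝ. The number λ = 2 is an eigenvalue of T_{n,ε,φ} if and only if n + 1 − (ε + φ)n + εφ(n − 1) = 0. In that case, the vector v ∈ ℝ^n with entries v_i = ε + (1 − ε)i, i = 1, …, n, is nonzero and satisfies T_{n,ε,φ} v = 2 v. -/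
open Matrix Real Filter

lemma Ttri_one {n : ℕ} (e f : ℝ) {i j : Fin n}
    (h : (i : ℕ) + 1 = (j : ℕ) ∨ (j : ℕ) + 1 = (i : ℕ)) : Ttri n e f i j = 1 := by
  have hne : i ≠ j := by rw [Fin.ne_iff_vne]; omega
  simp [Ttri, hne, h]

lemma Ttri_zero {n : ℕ} (e f : ℝ) {i j : Fin n}
    (h : ¬((i : ℕ) + 1 = (j : ℕ) ∨ (j : ℕ) + 1 = (i : ℕ))) (h2 : i ≠ j) :
    Ttri n e f i j = 0 := by
  simp [Ttri, h, h2]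

lemma Ttri_diag0 {n : ℕ} (e f : ℝ) {i : Fin n} (h : (i : ℕ) = 0) :
    Ttri n e f i i = e := by simp [Ttri, h]

lemma Ttri_diagn {n : ℕ} (e f : ℝ) {i : Fin n} (h : (i : ℕ) = n - 1) (h2 : (i : ℕ) ≠ 0) :
    Ttri n e f i i = f := by
  simp only [Ttri]
  rw [if_pos trivial, if_neg h2, if_pos h]

lemma Ttri_diagmid {n : ℕ} (e f : ℝ) {i : Fin n} (h : (i : ℕ) ≠ 0) (h2 : (i : ℕ) ≠ n - 1) :
    Ttri n e f i i = 0 := by simp [Ttri, h, h2]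

lemma sum_two {n : ℕ} (g : Fin n → ℝ) (a b : Fin n) (hab : a ≠ b)
    (h : ∀ j, j ≠ a → j ≠ b → g j = 0) :
    ∑ j, g j = g a + g b := by
  rw [← Finset.sum_pair hab]
  refine (Finset.sum_subset (Finset.subset_univ _) ?_).symm
  intro j _ hj
  simp only [Finset.mem_insert, Finset.mem_singleton, not_or] at hj
  exact h j hj.1 hj.2

lemma row0 {n : ℕ} (hn : 2 ≤ n) (e f : ℝ) (v : Fin n → ℝ) :
    (Ttri n e f).mulVec v ⟨0, by omega⟩ = e * v ⟨0, by omega⟩ + v ⟨1, by omega⟩ := by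
  show ∑ j, Ttri n e f ⟨0, by omega⟩ j * v j = _
  rw [sum_two _ ⟨0, by omega⟩ ⟨1, by omega⟩ (by rw [Fin.ne_iff_vne]; simp only [Fin.val_mk]; omega)]
  · rw [Ttri_diag0 e f (by rfl), Ttri_one e f (by left; rfl), one_mul]
  · intro j h1 h2
    rw [Fin.ne_iff_vne] at h1 h2
    simp only [Fin.val_mk] at h1 h2
    rw [Ttri_zero e f (by simp only [Fin.val_mk]; omega) (by rw [Fin.ne_iff_vne]; simp only [Fin.val_mk]; omega), zero_mul]

lemma rowmid {n : ℕ} (e f : ℝ) (v : Fin n → ℝ) (k : ℕ) (h1 : 1 ≤ k) (h2 : k < n - 1) :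
    (Ttri n e f).mulVec v ⟨k, by omega⟩ = v ⟨k - 1, by omega⟩ + v ⟨k + 1, by omega⟩ := by
  show ∑ j, Ttri n e f ⟨k, by omega⟩ j * v j = _
  rw [sum_two _ ⟨k - 1, by omega⟩ ⟨k + 1, by omega⟩ (by rw [Fin.ne_iff_vne]; simp only [Fin.val_mk]; omega)]
  · rw [Ttri_one e f (by right; simp only [Fin.val_mk]; omega), Ttri_one e f (by left; rfl)]
    ring
  · intro j ha hb
    rw [Fin.ne_iff_vne] at ha hb
    simp only [Fin.val_mk] at ha hb
    by_cases hjk : (j : ℕ) = k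
    · have : (⟨k, by omega⟩ : Fin n) = j := by rw [Fin.ext_iff]; simp [hjk]
      rw [this, Ttri_diagmid e f (by omega) (by omega), zero_mul]
    · rw [Ttri_zero e f (by simp only [Fin.val_mk]; omega) (by rw [Fin.ne_iff_vne]; simp only [Fin.val_mk]; omega), zero_mul]

lemma rowlast {n : ℕ} (hn : 2 ≤ n) (e f : ℝ) (v : Fin n → ℝ) :
    (Ttri n e f).mulVec v ⟨n - 1, by omega⟩ = v ⟨n - 2, by omega⟩ + f * v ⟨n - 1, by omega⟩ := by
  show ∑ j, Ttri n e f ⟨n - 1, by omega⟩ j * v j = _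
  rw [sum_two _ ⟨n - 2, by omega⟩ ⟨n - 1, by omega⟩ (by rw [Fin.ne_iff_vne]; simp only [Fin.val_mk]; omega)]
  · rw [Ttri_one e f (by right; simp only [Fin.val_mk]; omega), Ttri_diagn e f (by rfl) (by simp only [Fin.val_mk]; omega)]
    ring
  · intro j ha hb
    rw [Fin.ne_iff_vne] at ha hb
    simp only [Fin.val_mk] at ha hb
    have := j.isLt
    rw [Ttri_zero e f (by simp only [Fin.val_mk]; omega) (by rw [Fin.ne_iff_vne]; simp only [Fin.val_mk]; omega), zero_mul]

lemma part2 (n : ℕ) (hn : 2 ≤ n) (e f : ℝ)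
    (h : (n : ℝ) + 1 - (e + f) * n + e * f * ((n : ℝ) - 1) = 0) :
    ((fun i : Fin n => e + (1 - e) * ((i : ℕ) + 1 : ℝ)) : Fin n → ℝ) ≠ 0 ∧
    (Ttri n e f).mulVec (fun i : Fin n => e + (1 - e) * ((i : ℕ) + 1 : ℝ)) =
      (2 : ℝ) • ((fun i : Fin n => e + (1 - e) * ((i : ℕ) + 1 : ℝ)) : Fin n → ℝ) := by
  set w : Fin n → ℝ := fun i : Fin n => e + (1 - e) * ((i : ℕ) + 1 : ℝ) with hw
  have hn1 : ((n - 1 : ℕ) : ℝ) = (n : ℝ) - 1 := by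
    rw [Nat.cast_sub (by omega)]; norm_num
  have hn2 : ((n - 2 : ℕ) : ℝ) = (n : ℝ) - 2 := by
    rw [Nat.cast_sub (by omega)]; norm_num
  constructor
  · intro h0
    have := congrFun h0 ⟨0, by omega⟩
    simp only [hw, Pi.zero_apply, Fin.val_mk, Nat.cast_zero] at this
    linarith
  · funext i
    rcases i with ⟨k, hk⟩
    simp only [Pi.smul_apply, smul_eq_mul]
    by_cases hk0 : k = 0
    · subst hk0
      rw [row0 hn e f w]
      simp only [hw, Fin.val_mk, Nat.cast_zero, Nat.cast_one]
      ring
    · by_cases hkn : k = n - 1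
      · subst hkn
        rw [rowlast hn e f w]
        simp only [hw, Fin.val_mk, hn1, hn2]
        linear_combination (-1 : ℝ) * h
      · rw [rowmid e f w k (by omega) (by omega)]
        have hc : ((k - 1 : ℕ) : ℝ) = (k : ℝ) - 1 := by
          rw [Nat.cast_sub (by omega)]; norm_num
        simp only [hw, Fin.val_mk, hc, Nat.cast_add, Nat.cast_one]
        ring

theorem stmt14 (n : ℕ) (hn : 2 ≤ n) (e f : ℝ) :
    (HasEigen n e f 2 ↔ (n : ℝ) + 1 - (e + f) * n + e * f * ((n : ℝ) - 1) = 0) ∧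
    ((n : ℝ) + 1 - (e + f) * n + e * f * ((n : ℝ) - 1) = 0 →
      ((fun i : Fin n => e + (1 - e) * ((i : ℕ) + 1 : ℝ)) : Fin n → ℝ) ≠ 0 ∧
      (Ttri n e f).mulVec (fun i : Fin n => e + (1 - e) * ((i : ℕ) + 1 : ℝ)) =
        (2 : ℝ) • ((fun i : Fin n => e + (1 - e) * ((i : ℕ) + 1 : ℝ)) : Fin n → ℝ)) := by
  refine ⟨⟨?_, ?_⟩, part2 n hn e f⟩
  · rintro ⟨v, hv0, hv⟩
    have h2v : ∀ i : Fin n, (Ttri n e f).mulVec v i = 2 * v i := by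
      intro i; rw [hv]; simp
    set v0 : ℝ := v ⟨0, by omega⟩ with hv0def
    set d : ℝ := v ⟨1, by omega⟩ - v ⟨0, by omega⟩ with hddef
    -- recurrence for middle rows
    have hm : ∀ m : ℕ, (_ : m + 2 < n) →
        v ⟨m, by omega⟩ + v ⟨m + 2, by omega⟩ = 2 * v ⟨m + 1, by omega⟩ := by
      intro m hm2
      have := rowmid e f v (m + 1) (by omega) (by omega)
      rw [h2v] at this
      exact this.symm
    -- arithmetic progression
    have key : ∀ k : ℕ, ∀ hk : k < n, v ⟨k, hk⟩ = v0 + k * d := by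
      intro k
      induction k using Nat.strong_induction_on with
      | _ k ih =>
        intro hk
        match k with
        | 0 => simp [hv0def]
        | 1 => simp [hddef, hv0def]
        | (m + 2) =>
          have e1 := hm m hk
          rw [ih m (by omega) (by omega), ih (m + 1) (by omega) (by omega)] at e1
          push_cast
          push_cast at e1
          linarith
    -- v0 ≠ 0
    have hvne : v0 ≠ 0 := by
      intro h0
      apply hv0
      have hr0 := h2v ⟨0, by omega⟩
      rw [row0 hn e f v] at hr0
      have hd0 : d = 0 := by
        rw [hddef]
        rw [← hv0def] at hr0 ⊢
        rw [h0] at hr0 ⊢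
        simp at hr0 ⊢
        linarith
      funext i
      have := key i.val i.isLt
      rw [hd0, h0] at this
      simpa using this
    -- row 0 relation
    have hr0 := h2v ⟨0, by omega⟩
    rw [row0 hn e f v] at hr0
    have hd : d = (1 - e) * v0 := by
      rw [hddef, ← hv0def]
      rw [← hv0def] at hr0
      linarith [hr0]
    -- last row relation
    have hrl := h2v ⟨n - 1, by omega⟩
    rw [rowlast hn e f v] at hrl
    have hn1 : ((n - 1 : ℕ) : ℝ) = (n : ℝ) - 1 := by
      rw [Nat.cast_sub (by omega)]; norm_num
    have hn2 : ((n - 2 : ℕ) : ℝ) = (n : ℝ) - 2 := by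
      rw [Nat.cast_sub (by omega)]; norm_num
    rw [key (n - 2) (by omega), key (n - 1) (by omega), hn1, hn2] at hrl
    have hz : ((n : ℝ) + 1 - (e + f) * n + e * f * ((n : ℝ) - 1)) * v0 = 0 := by
      linear_combination (f * (n : ℝ) - f - (n : ℝ)) * hd - hrl
    exact (mul_eq_zero.mp hz).resolve_right hvne
  · intro h
    obtain ⟨h1, h2⟩ := part2 n hn e f h
    exact ⟨_, h1, h2⟩
end

section
/- Let n ≥ 2, ε, φ ∈ ℝ, and θ ∈ (0, ∞). The number λ = −2 cosh θ is an eigenvalue of T_{n,ε,φ} if and only if sinh((n+1)θ) + (ε + φ) sinh(nθ) + εφ sinh((n−1)θ) = 0. In that case, the vector v ∈ ℝ^n with entries v_i = (−1)^i (sinh(iθ) + ε sinh((i−1)θ)), i = 1, …, n, is nonzero and satisfies T_{n,ε,φ} v = λ v. -/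
open Matrix Real Filter

noncomputable def wfun (e θ : ℝ) (k : ℕ) : ℝ :=
  (-1 : ℝ) ^ (k + 1) * (Real.sinh ((k + 1 : ℕ) * θ) + e * Real.sinh (k * θ))

lemma sinh_step (θ a : ℝ) :
    Real.sinh ((a + 2) * θ) = 2 * Real.cosh θ * Real.sinh ((a + 1) * θ) - Real.sinh (a * θ) := by
  have e1 : (a + 2) * θ = (a + 1) * θ + θ := by ring
  have e2 : a * θ = (a + 1) * θ - θ := by ring
  rw [e1, e2, Real.sinh_add, Real.sinh_sub]
  ring

lemma wrec (e θ : ℝ) (k : ℕ) :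
    wfun e θ k + wfun e θ (k + 2) = -(2 * Real.cosh θ) * wfun e θ (k + 1) := by
  unfold wfun
  push_cast
  have h1 := sinh_step θ ((k : ℝ) + 1)
  have h2 := sinh_step θ (k : ℝ)
  ring_nf at h1 h2 ⊢
  linear_combination (-((-1:ℝ))^k) * h1 - e * ((-1:ℝ))^k * h2

lemma Ttri_row0 (n : ℕ) (hn : 2 ≤ n) (e f : ℝ) (v : Fin n → ℝ) :
    (Ttri n e f).mulVec v ⟨0, by omega⟩ = e * v ⟨0, by omega⟩ + v ⟨1, by omega⟩ := by
  have key : ∀ j : Fin n, Ttri n e f ⟨0, by omega⟩ j * v j =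
      (if (⟨0, by omega⟩ : Fin n) = j then e * v j else 0) +
      (if (⟨1, by omega⟩ : Fin n) = j then v j else 0) := by
    rintro ⟨j, hj⟩
    simp only [Ttri, Fin.mk.injEq, or_false, false_or]
    split_ifs <;> first | ring1 | (exfalso; omega) | (exfalso; (casesm* _ ∨ _) <;> first | assumption | omega)
  simp only [Matrix.mulVec, dotProduct, key, Finset.sum_add_distrib,
    Finset.sum_ite_eq, Finset.mem_univ, if_true]

lemma Ttri_rowlast (n : ℕ) (hn : 2 ≤ n) (e f : ℝ) (v : Fin n → ℝ) :
    (Ttri n e f).mulVec v ⟨n - 1, by omega⟩ = v ⟨n - 2, by omega⟩ + f * v ⟨n - 1, by omega⟩ := by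
  have key : ∀ j : Fin n, Ttri n e f ⟨n - 1, by omega⟩ j * v j =
      (if (⟨n - 2, by omega⟩ : Fin n) = j then v j else 0) +
      (if (⟨n - 1, by omega⟩ : Fin n) = j then f * v j else 0) := by
    rintro ⟨j, hj⟩
    simp only [Ttri, Fin.mk.injEq, or_false, false_or]
    split_ifs <;> first | ring1 | (exfalso; omega) | (exfalso; (casesm* _ ∨ _) <;> first | assumption | omega)
  simp only [Matrix.mulVec, dotProduct, key, Finset.sum_add_distrib,
    Finset.sum_ite_eq, Finset.mem_univ, if_true]

lemma Ttri_rowmid (n : ℕ) (e f : ℝ) (v : Fin n → ℝ) (i : ℕ)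
    (hi0 : 0 < i) (hi1 : i < n - 1) :
    (Ttri n e f).mulVec v ⟨i, by omega⟩ = v ⟨i - 1, by omega⟩ + v ⟨i + 1, by omega⟩ := by
  have key : ∀ j : Fin n, Ttri n e f ⟨i, by omega⟩ j * v j =
      (if (⟨i - 1, by omega⟩ : Fin n) = j then v j else 0) +
      (if (⟨i + 1, by omega⟩ : Fin n) = j then v j else 0) := by
    rintro ⟨j, hj⟩
    simp only [Ttri, Fin.mk.injEq, or_false, false_or]
    split_ifs <;> first | ring1 | (exfalso; omega) | (exfalso; (casesm* _ ∨ _) <;> first | assumption | omega)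
  simp only [Matrix.mulVec, dotProduct, key, Finset.sum_add_distrib,
    Finset.sum_ite_eq, Finset.mem_univ, if_true]

lemma wfun_zero (e θ : ℝ) : wfun e θ 0 = -Real.sinh θ := by
  simp [wfun]

lemma firstrow (e θ : ℝ) :
    e * wfun e θ 0 + wfun e θ 1 = -(2 * Real.cosh θ) * wfun e θ 0 := by
  unfold wfun
  push_cast
  have h := Real.sinh_two_mul θ
  ring_nf at h ⊢
  simp only [Real.sinh_zero, mul_zero, zero_mul]
  linear_combination h

lemma lastrow (e f θ : ℝ) (m : ℕ) :
    wfun e θ m + f * wfun e θ (m + 1) + (2 * Real.cosh θ) * wfun e θ (m + 1) =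
      (-1 : ℝ) ^ m * (Real.sinh (((m : ℝ) + 3) * θ) + (e + f) * Real.sinh (((m : ℝ) + 2) * θ) +
        e * f * Real.sinh (((m : ℝ) + 1) * θ)) := by
  unfold wfun
  push_cast
  have h1 := sinh_step θ ((m : ℝ) + 1)
  have h2 := sinh_step θ (m : ℝ)
  ring_nf at h1 h2 ⊢
  linear_combination (-((-1:ℝ))^m) * h1 - e * ((-1:ℝ))^m * h2

theorem stmt15 (n : ℕ) (hn : 2 ≤ n) (e f θ : ℝ) (hθ : 0 < θ) :
    (HasEigen n e f (-(2 * Real.cosh θ)) ↔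
      Real.sinh (((n : ℝ) + 1) * θ) + (e + f) * Real.sinh ((n : ℝ) * θ) +
        e * f * Real.sinh (((n : ℝ) - 1) * θ) = 0) ∧
    (Real.sinh (((n : ℝ) + 1) * θ) + (e + f) * Real.sinh ((n : ℝ) * θ) +
        e * f * Real.sinh (((n : ℝ) - 1) * θ) = 0 →
      ((fun i : Fin n =>
          (-1 : ℝ) ^ ((i : ℕ) + 1) *
            (Real.sinh (((i : ℕ) + 1 : ℝ) * θ) + e * Real.sinh ((i : ℕ) * θ))) :
          Fin n → ℝ) ≠ 0 ∧
      (Ttri n e f).mulVec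
          (fun i : Fin n =>
            (-1 : ℝ) ^ ((i : ℕ) + 1) *
              (Real.sinh (((i : ℕ) + 1 : ℝ) * θ) + e * Real.sinh ((i : ℕ) * θ))) =
        (-(2 * Real.cosh θ)) •
          ((fun i : Fin n =>
            (-1 : ℝ) ^ ((i : ℕ) + 1) *
              (Real.sinh (((i : ℕ) + 1 : ℝ) * θ) + e * Real.sinh ((i : ℕ) * θ))) :
            Fin n → ℝ)) := by
  obtain ⟨m, rfl⟩ : ∃ m, n = m + 2 := ⟨n - 2, by omega⟩
  have hsinh : Real.sinh θ ≠ 0 := ne_of_gt (Real.sinh_pos_iff.mpr hθ)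
  have hw0ne : wfun e θ 0 ≠ 0 := by rw [wfun_zero]; exact neg_ne_zero.mpr hsinh
  -- rewrite the statement condition to the `m`-form
  rw [show (((m + 2 : ℕ) : ℝ) + 1) = (m : ℝ) + 3 from by push_cast; ring,
    show (((m + 2 : ℕ) : ℝ) - 1) = (m : ℝ) + 1 from by push_cast; ring,
    show (((m + 2 : ℕ) : ℝ)) = (m : ℝ) + 2 from by push_cast; ring]
  -- rewrite the statement vector to `wfun`
  have hW : (fun i : Fin (m + 2) =>
      (-1 : ℝ) ^ ((i : ℕ) + 1) *
        (Real.sinh (((i : ℕ) + 1 : ℝ) * θ) + e * Real.sinh ((i : ℕ) * θ)))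
      = fun i : Fin (m + 2) => wfun e θ (i : ℕ) := by
    funext i
    simp only [wfun]
    push_cast
    ring
  rw [hW]
  set C : ℝ := Real.sinh (((m : ℝ) + 3) * θ) + (e + f) * Real.sinh (((m : ℝ) + 2) * θ) +
      e * f * Real.sinh (((m : ℝ) + 1) * θ) with hCdef
  -- part 2 : if C = 0 then wfun is an eigenvector
  have main2 : C = 0 →
      ((fun i : Fin (m + 2) => wfun e θ (i : ℕ)) ≠ 0 ∧
        (Ttri (m + 2) e f).mulVec (fun i : Fin (m + 2) => wfun e θ (i : ℕ)) =
          (-(2 * Real.cosh θ)) • (fun i : Fin (m + 2) => wfun e θ (i : ℕ))) := by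
    intro hC0
    constructor
    · intro h0
      have h1 := congrFun h0 ⟨0, by omega⟩
      simp only [Pi.zero_apply] at h1
      exact hw0ne h1
    · funext i
      rcases i with ⟨i, hi⟩
      rcases Nat.eq_zero_or_pos i with h0 | h0
      · subst h0
        rw [Ttri_row0 (m + 2) (by omega) e f]
        show e * wfun e θ 0 + wfun e θ 1 = -(2 * Real.cosh θ) * wfun e θ 0
        exact firstrow e θ
      · by_cases hlast : i = m + 1
        · subst hlast
          rw [show (⟨m + 1, hi⟩ : Fin (m + 2)) = ⟨m + 2 - 1, by omega⟩ from rfl,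
            Ttri_rowlast (m + 2) (by omega) e f]
          show wfun e θ m + f * wfun e θ (m + 1) = -(2 * Real.cosh θ) * wfun e θ (m + 1)
          have hl := lastrow e f θ m
          rw [← hCdef, hC0, mul_zero] at hl
          linarith
        · rw [Ttri_rowmid (m + 2) e f _ i h0 (by omega)]
          obtain ⟨k, rfl⟩ : ∃ k, i = k + 1 := ⟨i - 1, by omega⟩
          show wfun e θ k + wfun e θ (k + 2) = -(2 * Real.cosh θ) * wfun e θ (k + 1)
          exact wrec e θ k
  refine ⟨⟨?_, fun hC0 => ⟨_, (main2 hC0).1, (main2 hC0).2⟩⟩, main2⟩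
  rintro ⟨v, hv0, hveq⟩
  have key : ∀ k, ∀ hk : k < m + 2,
      wfun e θ 0 * v ⟨k, hk⟩ = v ⟨0, by omega⟩ * wfun e θ k := by
    intro k
    induction k using Nat.strong_induction_on with
    | _ k ih =>
      match k with
      | 0 => intro hk; exact mul_comm _ _
      | 1 =>
        intro hk
        have h := congrFun hveq ⟨0, by omega⟩
        rw [Ttri_row0 (m + 2) (by omega) e f] at h
        simp only [Pi.smul_apply, smul_eq_mul] at h
        have hw := firstrow e θ
        linear_combination (wfun e θ 0) * h - (v ⟨0, by omega⟩) * hw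
      | (k + 2) =>
        intro hk
        have h := congrFun hveq ⟨k + 1, by omega⟩
        rw [Ttri_rowmid (m + 2) e f v (k + 1) (by omega) (by omega)] at h
        simp only [Pi.smul_apply, smul_eq_mul] at h
        have h' : v ⟨k, by omega⟩ + v ⟨k + 2, by omega⟩ =
            -(2 * Real.cosh θ) * v ⟨k + 1, by omega⟩ := h
        have e1 := ih k (by omega) (by omega)
        have e2 := ih (k + 1) (by omega) (by omega)
        have hw := wrec e θ k
        linear_combination (wfun e θ 0) * h' - (v ⟨0, by omega⟩) * hw - e1 +
          (-(2 * Real.cosh θ)) * e2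
  have hv00 : v ⟨0, by omega⟩ ≠ 0 := by
    intro h00
    apply hv0
    funext j
    rcases j with ⟨j, hj⟩
    have hkey := key j hj
    rw [h00, zero_mul] at hkey
    exact (mul_eq_zero.mp hkey).resolve_left hw0ne
  have h := congrFun hveq ⟨m + 2 - 1, by omega⟩
  rw [Ttri_rowlast (m + 2) (by omega) e f] at h
  simp only [Pi.smul_apply, smul_eq_mul] at h
  have hA : v ⟨m, by omega⟩ + f * v ⟨m + 1, by omega⟩ + 2 * Real.cosh θ * v ⟨m + 1, by omega⟩ = 0 := by
    have h' : v ⟨m + 2 - 2, by omega⟩ + f * v ⟨m + 2 - 1, by omega⟩ =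
        -(2 * Real.cosh θ) * v ⟨m + 2 - 1, by omega⟩ := h
    have hm2 : (⟨m + 2 - 2, by omega⟩ : Fin (m + 2)) = ⟨m, by omega⟩ := rfl
    have hm1 : (⟨m + 2 - 1, by omega⟩ : Fin (m + 2)) = ⟨m + 1, by omega⟩ := rfl
    rw [hm2, hm1] at h'
    linarith
  have e1 := key m (by omega)
  have e2 := key (m + 1) (by omega)
  have hB : v ⟨0, by omega⟩ * (wfun e θ m + f * wfun e θ (m + 1) +
      (2 * Real.cosh θ) * wfun e θ (m + 1)) = 0 := by
    linear_combination (wfun e θ 0) * hA - e1 - (f + 2 * Real.cosh θ) * e2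
  rw [lastrow e f θ m] at hB
  rcases mul_eq_zero.mp hB with h' | h'
  · exact absurd h' hv00
  rcases mul_eq_zero.mp h' with h'' | h''
  · exact absurd h'' (pow_ne_zero m (neg_ne_zero.mpr one_ne_zero))
  · exact h''
end

section
/- Let n ≥ 2 and ε, φ ∈ ℝ. The number λ = −2 is an eigenvalue of T_{n,ε,φ} if and only if n + 1 + (ε + φ)n + εφ(n − 1) = 0. In that case, the vector v ∈ ℝ^n with entries v_i = (−1)^i (−ε + (1 + ε)i), i = 1, …, n, is nonzero and satisfies T_{n,ε,φ} v = −2 v. -/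
open Matrix Real Filter

lemma ttri_mulVec {n : ℕ} (e f : ℝ) (w : Fin n → ℝ) (i : Fin n) :
    (Ttri n e f).mulVec w i =
      (if (i:ℕ) = 0 then e else if (i:ℕ) = n - 1 then f else 0) * w i
      + (if h : (i:ℕ) + 1 < n then w ⟨(i:ℕ)+1, h⟩ else 0)
      + (if h : 0 < (i:ℕ) then w ⟨(i:ℕ)-1, Nat.lt_of_le_of_lt (Nat.sub_le _ _) i.isLt⟩ else 0) := by
  unfold Ttri Matrix.mulVec dotProduct
  have key : ∀ j : Fin n,
      (if i = j then (if (i:ℕ) = 0 then e else if (i:ℕ) = n-1 then f else 0)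
       else if (i:ℕ)+1 = (j:ℕ) ∨ (j:ℕ)+1 = (i:ℕ) then 1 else 0) * w j
    = (if j = i then (if (i:ℕ) = 0 then e else if (i:ℕ) = n-1 then f else 0) * w i else 0)
      + (if (j:ℕ) = (i:ℕ)+1 then w j else 0)
      + (if (j:ℕ)+1 = (i:ℕ) then w j else 0) := by
    intro j
    rcases eq_or_ne i j with rfl | hij
    · simp
    · have h1 : ¬ j = i := Ne.symm hij
      have h2 : (i:ℕ) ≠ (j:ℕ) := fun h => hij (Fin.ext h)
      by_cases ha : (i:ℕ)+1 = (j:ℕ)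
      · rw [if_neg hij, if_pos (Or.inl ha), if_neg h1, if_pos ha.symm, if_neg (by omega)]; ring
      · by_cases hb : (j:ℕ)+1 = (i:ℕ)
        · rw [if_neg hij, if_pos (Or.inr hb), if_neg h1, if_neg (by omega), if_pos hb]; ring
        · rw [if_neg hij, if_neg (by tauto), if_neg h1, if_neg (by omega), if_neg hb]; ring
  rw [Finset.sum_congr rfl fun j _ => key j, Finset.sum_add_distrib, Finset.sum_add_distrib]
  congr 1
  · congr 1
    · rw [Finset.sum_ite_eq' Finset.univ i]
      simp
    · by_cases h : (i:ℕ) + 1 < n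
      · rw [dif_pos h]
        have : ∀ j : Fin n, ((j:ℕ) = (i:ℕ)+1) = (j = (⟨(i:ℕ)+1, h⟩ : Fin n)) := by
          intro j; simp [Fin.ext_iff]
        simp only [this]
        rw [Finset.sum_ite_eq' Finset.univ]
        simp
      · rw [dif_neg h]
        apply Finset.sum_eq_zero
        intro j _
        rw [if_neg (by have := j.isLt; omega)]
  · by_cases h : 0 < (i:ℕ)
    · rw [dif_pos h]
      have : ∀ j : Fin n, ((j:ℕ)+1 = (i:ℕ)) = (j = (⟨(i:ℕ)-1, Nat.lt_of_le_of_lt (Nat.sub_le _ _) i.isLt⟩ : Fin n)) := by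
        intro j; simp [Fin.ext_iff]; omega
      simp only [this]
      rw [Finset.sum_ite_eq' Finset.univ]
      simp
    · rw [dif_neg h]
      apply Finset.sum_eq_zero
      intro j _
      rw [if_neg (by omega)]

theorem stmt16 (n : ℕ) (hn : 2 ≤ n) (e f : ℝ) :
    (HasEigen n e f (-2) ↔ (n : ℝ) + 1 + (e + f) * n + e * f * ((n : ℝ) - 1) = 0) ∧
    ((n : ℝ) + 1 + (e + f) * n + e * f * ((n : ℝ) - 1) = 0 →
      ((fun i : Fin n =>
          (-1 : ℝ) ^ ((i : ℕ) + 1) * (-e + (1 + e) * ((i : ℕ) + 1 : ℝ))) :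
          Fin n → ℝ) ≠ 0 ∧
      (Ttri n e f).mulVec
          (fun i : Fin n =>
            (-1 : ℝ) ^ ((i : ℕ) + 1) * (-e + (1 + e) * ((i : ℕ) + 1 : ℝ))) =
        (-2 : ℝ) •
          ((fun i : Fin n =>
            (-1 : ℝ) ^ ((i : ℕ) + 1) * (-e + (1 + e) * ((i : ℕ) + 1 : ℝ))) :
            Fin n → ℝ)) := by
  obtain ⟨m, rfl⟩ : ∃ m, n = m + 2 := ⟨n - 2, by omega⟩
  set w : Fin (m+2) → ℝ := fun i : Fin (m+2) =>
    (-1 : ℝ) ^ ((i : ℕ) + 1) * (-e + (1 + e) * ((i : ℕ) + 1 : ℝ)) with hw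
  have part2 : (((m+2 : ℕ) : ℝ) + 1 + (e + f) * ((m+2:ℕ):ℝ) + e * f * (((m+2:ℕ) : ℝ) - 1) = 0 →
      w ≠ 0 ∧ (Ttri (m+2) e f).mulVec w = (-2 : ℝ) • w) := by
    intro hcond
    push_cast at hcond
    constructor
    · intro h0
      have := congrFun h0 ⟨0, by omega⟩
      simp [hw] at this
    · funext i
      rw [ttri_mulVec]
      rcases eq_or_ne (i : ℕ) 0 with h0 | h0
      · rw [if_pos h0, dif_pos (by omega), dif_neg (by omega)]
        simp only [hw, Pi.smul_apply, smul_eq_mul, h0]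
        norm_num
        ring
      · rcases eq_or_ne (i : ℕ) (m + 2 - 1) with hl | hl
        · have hl' : (i : ℕ) = m + 1 := by omega
          rw [if_neg h0, if_pos hl, dif_neg (by omega), dif_pos (by omega)]
          simp only [hw, Pi.smul_apply, smul_eq_mul, hl']
          have hr : m + 1 - 1 = m := by omega
          rw [hr]
          push_cast
          linear_combination ((-1:ℝ)^m) * hcond
        · have h1 : 1 ≤ (i : ℕ) := by omega
          have h2 : (i : ℕ) + 1 < m + 2 := by have := i.isLt; omega
          rw [if_neg h0, if_neg hl, dif_pos h2, dif_pos (by omega)]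
          simp only [hw, Pi.smul_apply, smul_eq_mul]
          have h3 : (i : ℕ) - 1 + 1 = (i : ℕ) := by omega
          rw [h3, Nat.cast_sub h1]
          push_cast
          ring
  refine ⟨⟨?_, fun h => ⟨w, (part2 h).1, (part2 h).2⟩⟩, part2⟩
  rintro ⟨v, hv0, hveq⟩
  set t : ℝ := v ⟨0, by omega⟩ with ht
  have key : ∀ i (h : i < m + 2), v ⟨i, h⟩ =
      -t * ((-1 : ℝ) ^ (i + 1) * (-e + (1 + e) * ((i : ℕ) + 1 : ℝ))) := by
    intro i
    induction i using Nat.strong_induction_on with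
    | _ i ih =>
      match i with
      | 0 =>
        intro h
        show t = _
        push_cast
        ring
      | 1 =>
        intro h
        have E := congrFun hveq ⟨0, by omega⟩
        rw [ttri_mulVec] at E
        simp only [Pi.smul_apply, smul_eq_mul] at E
        norm_num at E
        rw [show (1 : Fin (m+2)) = ⟨1, h⟩ from by ext; simp,
            show (0 : Fin (m+2)) = ⟨0, by omega⟩ from by ext; simp, ← ht] at E
        push_cast
        linear_combination E
      | (j+2) =>
        intro h
        have E := congrFun hveq ⟨j+1, by omega⟩
        rw [ttri_mulVec] at E
        simp only [Pi.smul_apply, smul_eq_mul] at E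
        rw [if_neg (by omega), if_neg (by omega), dif_pos (by omega), dif_pos (by omega)] at E
        have hj0 := ih j (by omega) (by omega)
        have hj1 := ih (j+1) (by omega) (by omega)
        have hred : j + 1 - 1 = j := by omega
        simp only [hred] at E
        rw [hj0, hj1] at E
        push_cast at E ⊢
        linear_combination E
  have htne : t ≠ 0 := by
    intro h0
    apply hv0
    funext i
    have := key i i.isLt
    rw [h0] at this
    simpa using this
  have E := congrFun hveq ⟨m + 1, by omega⟩
  rw [ttri_mulVec] at E
  simp only [Pi.smul_apply, smul_eq_mul] at E
  rw [if_neg (by omega), if_pos (by omega), dif_neg (by omega), dif_pos (by omega)] at E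
  have hred : m + 1 - 1 = m := by omega
  simp only [hred] at E
  rw [key (m+1) (by omega), key m (by omega)] at E
  have h2 : t * ((-1:ℝ)^m * (((m+2:ℕ) : ℝ) + 1 + (e + f) * ((m+2:ℕ):ℝ) + e * f * (((m+2:ℕ) : ℝ) - 1))) = 0 := by
    push_cast at E ⊢
    linear_combination -E
  have h3 := (mul_eq_zero.mp h2).resolve_left htne
  have h4 := (mul_eq_zero.mp h3).resolve_left (pow_ne_zero m (by norm_num : (-1:ℝ) ≠ 0))
  exact h4
end

section
/- Let n ≥ 2 and ε, φ ∈ ℝ with εφ = 1, ε > 0, φ > 0, and ε ≠ 1. Then the n (pairwise distinct) eigenvalues of T_{n,ε,φ} are exactly ε + ε^{-1} together with 2 cos(kπ/n) for k = 1, …, n − 1. Moreover: (i) the vector v with entries v_i = ε^{-(i-1)}, i = 1, …, n, satisfies T_{n,ε,φ} v = (ε + ε^{-1}) v; and (ii) for each k = 1, …, n − 1, the vector v^{(k)} with entries v^{(k)}_i = sin(i kπ/n) − ε sin((i−1) kπ/n), i = 1, …, n, is nonzero and satisfies T_{n,ε,φ} v^{(k)} = 2 cos(kπ/n) v^{(k)}.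 -/
open Matrix Real Filter

/-- The candidate list of eigenvalues in the case `εφ = 1`:
`ε + ε⁻¹` (for k = 0) together with `2 cos(kπ/n)` for `k = 1, …, n-1`. -/
noncomputable def eigList (n : ℕ) (e : ℝ) : Fin n → ℝ :=
  fun k => if (k : ℕ) = 0 then e + e⁻¹ else 2 * Real.cos ((k : ℕ) * π / n)

/-!
An eigenvector of `T_{n,ε,φ}` for `x` is a solution of the recurrence
`u (m - 1) + u (m + 1) = x * u m` on `0, …, n - 1` whose ghost values satisfy the boundary
conditions `u (-1) = ε u 0` and `u n = φ u (n - 1)`. When `εφ = 1` these hold for `u m = ε^{-m}`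
with `x = ε + ε⁻¹`, and for `u m = sin ((m + 1) θ) - ε sin (m θ)` with `x = 2 cos θ` whenever
`sin (n θ) = 0`. The resulting `n` eigenvalues are distinct, because `2 cos (kπ/n) ≤ 2 < ε + ε⁻¹`
and `cos` is injective on `[0, π]`; as eigenvectors for distinct eigenvalues are linearly
independent, an `n × n` matrix has no other eigenvalue.
-/

theorem two_lt_add_inv {e : ℝ} (he : 0 < e) (hne : e ≠ 1) : 2 < e + e⁻¹ := by
  have hsq : 0 < (e - 1) ^ 2 / e := div_pos (pow_two_pos_of_ne_zero (sub_ne_zero_of_ne hne)) he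
  have hid : e + e⁻¹ - 2 = (e - 1) ^ 2 / e := by field_simp; ring
  linarith

theorem sin_nat_mul_pi_div_pos {k n : ℕ} (hk : 0 < k) (hkn : k < n) : 0 < sin (k * π / n) := by
  have hn : (0 : ℝ) < n := by exact_mod_cast hk.trans hkn
  apply sin_pos_of_pos_of_lt_pi (div_pos (mul_pos (by exact_mod_cast hk) pi_pos) hn)
  rw [div_lt_iff₀ hn, mul_comm π]
  exact mul_lt_mul_of_pos_right (by exact_mod_cast hkn) pi_pos

theorem Module.End.HasEigenvalue.exists_eq_of_finrank_le {K V ι : Type*} [Field K]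
    [AddCommGroup V] [Module K V] [FiniteDimensional K V] [Fintype ι] {f : Module.End K V}
    {μ : ι → K} (hμ : Function.Injective μ) (hμf : ∀ i, f.HasEigenvalue (μ i))
    (hcard : Module.finrank K V ≤ Fintype.card ι) {x : K} (hx : f.HasEigenvalue x) :
    ∃ i, μ i = x := by
  by_contra! hxμ
  let μ' : Option ι → K := fun o => o.elim x μ
  have hμ' : Function.Injective μ' := by
    rintro (_ | i) (_ | j) (h : μ' _ = μ' _)
    exacts [rfl, (hxμ j h.symm).elim, (hxμ i h).elim, congrArg some (hμ h)]
  choose v hv using fun o => (show f.HasEigenvalue (μ' o) from o.rec hx hμf).exists_hasEigenvector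
  have := (Module.End.eigenvectors_linearIndependent' f μ' hμ' v hv).fintype_card_le_finrank
  simp only [Fintype.card_option] at this
  omega

theorem Ttri_apply_eq_zero {n : ℕ} {e f : ℝ} {i j : Fin n}
    (hdiag : (i : ℕ) = j → 0 < (i : ℕ) ∧ (i : ℕ) + 1 < n)
    (hsucc : (i : ℕ) + 1 ≠ j) (hpred : (j : ℕ) + 1 ≠ i) : Ttri n e f i j = 0 := by
  simp only [Ttri, Fin.ext_iff]
  split_ifs <;> first | rfl | omega

theorem Ttri_apply_of_succ_eq {n : ℕ} {e f : ℝ} {i j : Fin n} (h : (i : ℕ) + 1 = j) :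
    Ttri n e f i j = 1 := by
  simp only [Ttri]
  rw [if_neg (Fin.ne_of_val_ne (by omega)), if_pos (Or.inl h)]

theorem Ttri_apply_of_eq_succ {n : ℕ} {e f : ℝ} {i j : Fin n} (h : (i : ℕ) = j + 1) :
    Ttri n e f i j = 1 := by
  simp only [Ttri]
  rw [if_neg (Fin.ne_of_val_ne (by omega)), if_pos (Or.inr h.symm)]

theorem Ttri_apply_first {n : ℕ} {e f : ℝ} {i : Fin n} (h : (i : ℕ) = 0) : Ttri n e f i i = e := by
  simp [Ttri, h]

theorem Ttri_apply_last {n : ℕ} {e f : ℝ} {i : Fin n} (h0 : (i : ℕ) ≠ 0) (h : (i : ℕ) = n - 1) :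
    Ttri n e f i i = f := by
  rw [h] at h0
  simp [Ttri, h0, h]

theorem Ttri_mulVec_eq_smul_of_recurrence {n : ℕ} (hn : 2 ≤ n) {e f x : ℝ} (u : ℤ → ℝ)
    (hrec : ∀ m : ℤ, u (m - 1) + u (m + 1) = x * u m)
    (hfirst : u (-1) = e * u 0) (hlast : u n = f * u (n - 1))
    {v : Fin n → ℝ} (hv : ∀ i, v i = u i) :
    Ttri n e f *ᵥ v = x • v := by
  obtain ⟨m, rfl⟩ : ∃ m, n = m + 2 := ⟨n - 2, by omega⟩
  ext ⟨i, hi⟩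
  simp only [mulVec, dotProduct, Pi.smul_apply, smul_eq_mul, hv]
  have hsum (a b : ℕ) (ha : a < m + 2) (hb : b < m + 2) (hab : a < b)
      (h : ∀ j < m + 2, j ≠ a → j ≠ b → (i = j → 0 < i ∧ i + 1 < m + 2) ∧ i + 1 ≠ j ∧ j + 1 ≠ i) :
      ∑ j, Ttri (m + 2) e f ⟨i, hi⟩ j * u j =
        Ttri (m + 2) e f ⟨i, hi⟩ ⟨a, ha⟩ * u a + Ttri (m + 2) e f ⟨i, hi⟩ ⟨b, hb⟩ * u b :=
    Fintype.sum_eq_add _ _ (Fin.ne_of_val_ne hab.ne) fun j ⟨ha, hb⟩ => by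
      obtain ⟨h1, h2, h3⟩ := h j j.isLt (Fin.val_ne_iff.2 ha) (Fin.val_ne_iff.2 hb)
      rw [Ttri_apply_eq_zero h1 h2 h3, zero_mul]
  have h := hrec i
  rcases i with _ | i
  · rw [hsum 0 1 (by omega) (by omega) one_pos fun j _ _ _ => by omega, Ttri_apply_first rfl,
      Ttri_apply_of_succ_eq rfl, one_mul]
    push_cast at h ⊢
    linear_combination (norm := ring_nf) h - hfirst
  obtain rfl | hi' : m = i ∨ i < m := by omega
  · rw [hsum m (m + 1) (by omega) (by omega) (by omega) fun j _ _ _ => by omega,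
      Ttri_apply_of_eq_succ rfl, Ttri_apply_last m.succ_ne_zero rfl, one_mul]
    push_cast at h hlast ⊢
    linear_combination (norm := ring_nf) h - hlast
  · rw [hsum i (i + 2) (by omega) (by omega) (by omega) fun j _ _ _ => by omega,
      Ttri_apply_of_eq_succ rfl, Ttri_apply_of_succ_eq rfl, one_mul, one_mul]
    push_cast at h ⊢
    linear_combination (norm := ring_nf) h

theorem hasEigen_iff_hasEigenvalue {n : ℕ} {e f x : ℝ} :
    HasEigen n e f x ↔ Module.End.HasEigenvalue (toLin' (Ttri n e f)) x := by
  constructor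
  · rintro ⟨v, hv0, hv⟩
    exact Module.End.hasEigenvalue_of_hasEigenvector
      ⟨Module.End.mem_eigenspace_iff.2 (by rwa [toLin'_apply]), hv0⟩
  · intro hx
    obtain ⟨v, hv⟩ := hx.exists_hasEigenvector
    exact ⟨v, hv.2, by rw [← toLin'_apply, hv.apply_eq_smul]⟩

theorem Ttri_mulVec_inv_pow {n : ℕ} (hn : 2 ≤ n) {e f : ℝ} (hef : e * f = 1) :
    Ttri n e f *ᵥ (fun i : Fin n => e⁻¹ ^ (i : ℕ)) = (e + e⁻¹) • fun i : Fin n => e⁻¹ ^ (i : ℕ) := by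
  have he : e ≠ 0 := left_ne_zero_of_mul_eq_one hef
  obtain rfl : f = e⁻¹ := eq_inv_of_mul_eq_one_right hef
  refine Ttri_mulVec_eq_smul_of_recurrence hn (fun m : ℤ => e⁻¹ ^ m) (fun m => ?_) (by simp) ?_
    fun i => (zpow_natCast _ _).symm
  · simp only [zpow_sub_one₀ (inv_ne_zero he), zpow_add_one₀ (inv_ne_zero he), inv_inv]
    ring
  · simp only [zpow_sub_one₀ (inv_ne_zero he), inv_inv]
    field_simp

noncomputable def sinVec (n : ℕ) (e θ : ℝ) : Fin n → ℝ :=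
  fun i => sin (((i : ℕ) + 1 : ℝ) * θ) - e * sin ((i : ℕ) * θ)

theorem sinVec_ne_zero {n : ℕ} (hn : 0 < n) {e θ : ℝ} (hθ : sin θ ≠ 0) : sinVec n e θ ≠ 0 :=
  Function.ne_iff.2 ⟨⟨0, hn⟩, by simpa [sinVec] using hθ⟩

theorem Ttri_mulVec_sinVec {n : ℕ} (hn : 2 ≤ n) {e f θ : ℝ} (hef : e * f = 1)
    (hθ : sin (n * θ) = 0) : Ttri n e f *ᵥ sinVec n e θ = (2 * cos θ) • sinVec n e θ := by
  have hrec (a : ℝ) : sin ((a - 1) * θ) + sin ((a + 1) * θ) = 2 * cos θ * sin (a * θ) := by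
    rw [sub_mul, add_mul, one_mul, sin_sub, sin_add]
    ring
  refine Ttri_mulVec_eq_smul_of_recurrence hn (fun m : ℤ => sin ((m + 1) * θ) - e * sin (m * θ))
    (fun m => ?_) ?_ ?_ fun i => by simp [sinVec]
  · push_cast
    linear_combination (norm := ring_nf) hrec (m + 1) - e * hrec m
  · simp [neg_mul, sin_neg]
  · push_cast
    rw [add_mul, sub_mul, one_mul, sin_add, sin_sub, hθ]
    linear_combination (norm := ring_nf) (-(cos (n * θ) * sin θ)) * hef - f * hθ

theorem eigList_injective {n : ℕ} {e : ℝ} (he : 0 < e) (hne : e ≠ 1) :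
    Function.Injective (eigList n e) := by
  have hangle (k : Fin n) : (k : ℕ) * π / n ∈ Set.Icc 0 π := by
    have hn : (0 : ℝ) < n := by exact_mod_cast k.pos
    refine ⟨by positivity, (div_le_iff₀ hn).2 ?_⟩
    rw [mul_comm π]
    exact mul_le_mul_of_nonneg_right (by exact_mod_cast k.isLt.le) pi_pos.le
  have hlt (k : Fin n) : 2 * cos ((k : ℕ) * π / n) < e + e⁻¹ := by
    linarith [cos_le_one ((k : ℕ) * π / n), two_lt_add_inv he hne]
  intro a b hab
  simp only [eigList] at hab
  split_ifs at hab with ha hb hb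
  · exact Fin.ext (ha.trans hb.symm)
  · exact absurd hab (hlt b).ne'
  · exact absurd hab (hlt a).ne
  · have h := injOn_cos (hangle a) (hangle b) (by linarith)
    have hn : (n : ℝ) ≠ 0 := by exact_mod_cast a.pos.ne'
    rw [div_left_inj' hn, mul_left_inj' pi_ne_zero] at h
    exact Fin.ext (by exact_mod_cast h)

theorem stmt17_general (n : ℕ) (hn : 2 ≤ n) (e f : ℝ)
    (hef : e * f = 1) (he : 0 < e) (hne : e ≠ 1) :
    -- the n eigenvalues are pairwise distinct and are exactly the listed values
    Function.Injective (eigList n e) ∧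
    (∀ x : ℝ, HasEigen n e f x ↔ ∃ k : Fin n, x = eigList n e k) ∧
    -- (i) the outlier eigenvector
    (Ttri n e f).mulVec (fun i : Fin n => e⁻¹ ^ (i : ℕ)) =
      (e + e⁻¹) • ((fun i : Fin n => e⁻¹ ^ (i : ℕ)) : Fin n → ℝ) ∧
    -- (ii) the eigenvectors for the eigenvalues 2 cos(kπ/n), k = 1, …, n-1
    (∀ k : ℕ, 1 ≤ k → k ≤ n - 1 →
      ((fun i : Fin n =>
          Real.sin (((i : ℕ) + 1 : ℝ) * (k * π / n)) -
            e * Real.sin ((i : ℕ) * (k * π / n))) : Fin n → ℝ) ≠ 0 ∧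
      (Ttri n e f).mulVec
          (fun i : Fin n =>
            Real.sin (((i : ℕ) + 1 : ℝ) * (k * π / n)) -
              e * Real.sin ((i : ℕ) * (k * π / n))) =
        (2 * Real.cos (k * π / n)) •
          ((fun i : Fin n =>
            Real.sin (((i : ℕ) + 1 : ℝ) * (k * π / n)) -
              e * Real.sin ((i : ℕ) * (k * π / n))) : Fin n → ℝ)) := by
  have hgeom := Ttri_mulVec_inv_pow hn hef
  have hsin (k : ℕ) (hk1 : 1 ≤ k) (hk2 : k ≤ n - 1) :
      sinVec n e (k * π / n) ≠ 0 ∧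
        Ttri n e f *ᵥ sinVec n e (k * π / n) = (2 * cos (k * π / n)) • sinVec n e (k * π / n) :=
    ⟨sinVec_ne_zero (by omega) (sin_nat_mul_pi_div_pos hk1 (by omega)).ne',
      Ttri_mulVec_sinVec hn hef (by rw [mul_div_cancel₀ _ (by positivity)]; exact sin_nat_mul_pi k)⟩
  have heig (k : Fin n) : HasEigen n e f (eigList n e k) := by
    by_cases hk : (k : ℕ) = 0
    · refine ⟨fun i : Fin n => e⁻¹ ^ (i : ℕ), Function.ne_iff.2 ⟨⟨0, by omega⟩, by simp⟩, ?_⟩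
      rw [eigList, if_pos hk]
      exact hgeom
    · obtain ⟨hv0, hv⟩ := hsin k (by omega) (by omega)
      exact ⟨_, hv0, by rwa [eigList, if_neg hk]⟩
  refine ⟨eigList_injective he hne, fun x => ⟨fun hx => ?_, ?_⟩, hgeom, hsin⟩
  · obtain ⟨k, hk⟩ := (hasEigen_iff_hasEigenvalue.1 hx).exists_eq_of_finrank_le
      (eigList_injective he hne) (fun k => hasEigen_iff_hasEigenvalue.1 (heig k)) (by simp)
    exact ⟨k, hk.symm⟩
  · rintro ⟨k, rfl⟩
    exact heig k

theorem stmt17 (n : ℕ) (hn : 2 ≤ n) (e f : ℝ)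
    (hef : e * f = 1) (he : 0 < e) (hf : 0 < f) (hne : e ≠ 1) :
    -- the n eigenvalues are pairwise distinct and are exactly the listed values
    Function.Injective (eigList n e) ∧
    (∀ x : ℝ, HasEigen n e f x ↔ ∃ k : Fin n, x = eigList n e k) ∧
    -- (i) the outlier eigenvector
    (Ttri n e f).mulVec (fun i : Fin n => e⁻¹ ^ (i : ℕ)) =
      (e + e⁻¹) • ((fun i : Fin n => e⁻¹ ^ (i : ℕ)) : Fin n → ℝ) ∧
    -- (ii) the eigenvectors for the eigenvalues 2 cos(kπ/n), k = 1, …, n-1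
    (∀ k : ℕ, 1 ≤ k → k ≤ n - 1 →
      ((fun i : Fin n =>
          Real.sin (((i : ℕ) + 1 : ℝ) * (k * π / n)) -
            e * Real.sin ((i : ℕ) * (k * π / n))) : Fin n → ℝ) ≠ 0 ∧
      (Ttri n e f).mulVec
          (fun i : Fin n =>
            Real.sin (((i : ℕ) + 1 : ℝ) * (k * π / n)) -
              e * Real.sin ((i : ℕ) * (k * π / n))) =
        (2 * Real.cos (k * π / n)) •
          ((fun i : Fin n =>
            Real.sin (((i : ℕ) + 1 : ℝ) * (k * π / n)) -
              e * Real.sin ((i : ℕ) * (k * π / n))) : Fin n → ℝ)) :=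
  stmt17_general n hn e f hef he hne
end
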